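/- arXiv:2402.00762 — 12 statements merged into one kernel-verified Lean document; each statement's English description precedes it below -/
import Mathlib

section
/- Let S be a commutative additive monoid with only finitely many invertible elements, let S_+ denote its set of non-invertible elements, and let T be an S-module (a set with an action • : S × T → T satisfying 0•t = t and (s+s')•t = s•(s'•t)) that is finitely generated over S, say T = ⋃_{i=1}^k S•t_i. Then the set of primitive elements T_prim := T \ (S_+ • T), where S_+ • T = {s•t : s ∈ S_+, t ∈ T}, is finite; indeed its cardinality is at most k times the number of invertible elements of S. -/
/-- For a commutative additive monoid `S` with finitely many
invertible (add-unit) elements and an `S`-module `T` generated by `k` elements,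
the set of primitive elements `T \ (S₊ • T)` is finite, of cardinality at most
`k` times the number of invertible elements of `S`. -/
theorem stmt_0 {S T : Type*} [AddCommMonoid S] [AddAction S T]
    (hU : {s : S | IsAddUnit s}.Finite)
    (k : ℕ) (g : Fin k → T)
    (hgen : ∀ t : T, ∃ (s : S) (i : Fin k), t = s +ᵥ g i) :
    {t : T | ¬ ∃ (s : S) (t' : T), ¬ IsAddUnit s ∧ t = s +ᵥ t'}.Finite ∧
      {t : T | ¬ ∃ (s : S) (t' : T), ¬ IsAddUnit s ∧ t = s +ᵥ t'}.ncard ≤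
        k * hU.toFinset.card := by
  classical
  set F : Finset T := (hU.toFinset ×ˢ (Finset.univ : Finset (Fin k))).image
      (fun p : S × Fin k => p.1 +ᵥ g p.2) with hF
  have hsub : {t : T | ¬ ∃ (s : S) (t' : T), ¬ IsAddUnit s ∧ t = s +ᵥ t'} ⊆ ↑F := by
    intro t ht
    obtain ⟨s, i, hsi⟩ := hgen t
    by_cases hs : IsAddUnit s
    · exact Finset.mem_coe.mpr (Finset.mem_image.mpr
        ⟨(s, i), Finset.mem_product.mpr ⟨hU.mem_toFinset.mpr hs, Finset.mem_univ i⟩, hsi.symm⟩)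
    · exact absurd ⟨s, g i, hs, hsi⟩ ht
  have hfin := (F.finite_toSet).subset hsub
  refine ⟨hfin, ?_⟩
  calc {t : T | ¬ ∃ (s : S) (t' : T), ¬ IsAddUnit s ∧ t = s +ᵥ t'}.ncard
      ≤ (↑F : Set T).ncard := Set.ncard_le_ncard hsub F.finite_toSet
    _ = F.card := Set.ncard_coe_finset F
    _ ≤ (hU.toFinset ×ˢ (Finset.univ : Finset (Fin k))).card := Finset.card_image_le
    _ = hU.toFinset.card * k := by simp [Finset.card_product]
    _ = k * hU.toFinset.card := Nat.mul_comm _ _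
end

section
/- Let S be a finitely generated commutative additive monoid with only finitely many invertible elements, let S_+ denote its set of non-invertible elements, and let T be an S-module that is finitely generated over S. Assume that for all s ∈ S and t ∈ T the equality s•t = t implies that s is invertible in S. Then the set T_prim := T \ (S_+ • T) generates T over S, i.e., T = ⋃_{t ∈ T_prim} S•t. -/
/-!
Call `x` a proper translate of `y` when `x = c +ᵥ y` with `c` a non-unit; the primitive elements
are exactly the minimal ones for this relation, so it suffices to show it is well founded. Along an
infinite descending chain `t₀, t₁, …` every `tₘ` is a proper translate of every later `tₙ`. Writing
`tₙ = uₙ +ᵥ g iₙ`, Dickson's lemma for the finitely generated monoid `S` (a quotient of `ℕᵏ`) and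
the pigeonhole principle give `m < n` with `iₘ = iₙ` and `uₙ = uₘ + d`, so `tₙ = d +ᵥ tₘ`. Then
`tₙ = (d + c) +ᵥ tₙ` with `c` a non-unit, contradicting the hypothesis on fixed points.
-/

theorem AddMonoid.FG.wellQuasiOrdered_exists_add {S : Type*} [AddCommMonoid S]
    (hS : AddMonoid.FG S) : WellQuasiOrdered fun a b : S => ∃ d, b = a + d := by
  have := Module.Finite.iff_addMonoid_fg.mpr hS
  obtain ⟨n, f, hf⟩ := Module.Finite.exists_fin' ℕ S
  refine wellQuasiOrdered_le.of_surjective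
    ⟨f, fun {x y} (hxy : x ≤ y) => ⟨f (y - x), ?_⟩⟩ hf
  rw [← map_add, add_tsub_cancel_of_le hxy]

section ProperTranslate

variable (S : Type*) {T : Type*}

def ProperTranslate [AddMonoid S] [AddAction S T] (y x : T) : Prop :=
  ∃ c : S, ¬ IsAddUnit c ∧ x = c +ᵥ y

instance [AddCommMonoid S] [AddAction S T] : IsTrans T (flip (ProperTranslate S)) where
  trans := by
    rintro x y z ⟨c, hc, rfl⟩ ⟨c', -, rfl⟩
    exact ⟨c + c', fun h => hc (isAddUnit_of_add_isAddUnit_left h), (add_vadd _ _ _).symm⟩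

theorem exists_vadd_eq_of_wellFounded_properTranslate [AddMonoid S] [AddAction S T]
    (hwf : WellFounded (ProperTranslate S (T := T))) (t : T) :
    ∃ (s : S) (t' : T), (∀ y, ¬ ProperTranslate S y t') ∧ t = s +ᵥ t' := by
  induction t using hwf.induction with
  | _ t ih =>
    by_cases hmin : ∀ y, ¬ ProperTranslate S y t
    · exact ⟨0, t, hmin, (zero_vadd S t).symm⟩
    · push Not at hmin
      obtain ⟨y, hy⟩ := hmin
      obtain ⟨s, t', ht', rfl⟩ := ih y hy
      obtain ⟨c, -, rfl⟩ := hy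
      exact ⟨c + s, t', ht', (add_vadd c s t').symm⟩

theorem wellFounded_properTranslate {ι : Type*} [Finite ι] [AddCommMonoid S] [AddAction S T]
    (hS : AddMonoid.FG S) (g : ι → T) (hgen : ∀ t : T, ∃ (s : S) (i : ι), t = s +ᵥ g i)
    (hfix : ∀ (s : S) (t : T), s +ᵥ t = t → IsAddUnit s) :
    WellFounded (ProperTranslate S (T := T)) := by
  refine wellFounded_iff_isEmpty_descending_chain.mpr ⟨fun ⟨t, ht⟩ => ?_⟩
  choose u i hui using fun n => hgen (t n)
  obtain ⟨m, n, hmn, him, d, hd⟩ :=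
    (Finite.wellQuasiOrdered (· = ·)).prod hS.wellQuasiOrdered_exists_add fun n => (i n, u n)
  dsimp only at him hd
  obtain ⟨c, hc, hcm⟩ := Nat.rel_of_forall_rel_succ_of_lt (flip (ProperTranslate S)) ht hmn
  have hdm : t n = d +ᵥ t m := by
    rw [hui n, hui m, ← him, hd, add_comm, add_vadd]
  have hfixed : (d + c) +ᵥ t n = t n := by
    rw [add_vadd, ← hcm, hdm]
  exact hc (isAddUnit_of_add_isAddUnit_right (hfix _ _ hfixed))

end ProperTranslate

theorem stmt_1_general {S T : Type*} [AddCommMonoid S] [AddAction S T]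
    (hfgS : AddMonoid.FG S)
    (k : ℕ) (g : Fin k → T)
    (hgen : ∀ t : T, ∃ (s : S) (i : Fin k), t = s +ᵥ g i)
    (hfix : ∀ (s : S) (t : T), s +ᵥ t = t → IsAddUnit s) :
    ∀ t : T, ∃ (s : S) (t' : T),
      t' ∈ {x : T | ¬ ∃ (s' : S) (x' : T), ¬ IsAddUnit s' ∧ x = s' +ᵥ x'} ∧
      t = s +ᵥ t' := by
  intro t
  obtain ⟨s, t', hmin, rfl⟩ := exists_vadd_eq_of_wellFounded_properTranslate S
    (wellFounded_properTranslate S hfgS g hgen hfix) t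
  exact ⟨s, t', fun ⟨c, y, hc, hy⟩ => hmin y ⟨c, hc, hy⟩, rfl⟩

/-- Let `S` be a finitely generated commutative additive monoid with
finitely many invertible elements, and `T` a finitely generated `S`-module such that
`s +ᵥ t = t` only for invertible `s`. Then the primitive elements `T \ (S₊ • T)`
generate `T` over `S`. -/
theorem stmt_1 {S T : Type*} [AddCommMonoid S] [AddAction S T]
    (hfgS : AddMonoid.FG S)
    (hU : {s : S | IsAddUnit s}.Finite)
    (k : ℕ) (g : Fin k → T)
    (hgen : ∀ t : T, ∃ (s : S) (i : Fin k), t = s +ᵥ g i)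
    (hfix : ∀ (s : S) (t : T), s +ᵥ t = t → IsAddUnit s) :
    ∀ t : T, ∃ (s : S) (t' : T),
      t' ∈ {x : T | ¬ ∃ (s' : S) (x' : T), ¬ IsAddUnit s' ∧ x = s' +ᵥ x'} ∧
      t = s +ᵥ t' :=
  stmt_1_general hfgS k g hgen hfix
end

section
/- Let S be a finitely generated commutative additive monoid whose only invertible element is 0, and let T be an S-module that is finitely generated over S, such that for all s ∈ S and t ∈ T the equality s•t = t implies s = 0. Then every element of T has finite level: for each t ∈ T there exists h ∈ ℕ such that t cannot be written as (s_1 + s_2 + ⋯ + s_h)•t' with s_1, …, s_h ∈ S \ {0} and t' ∈ T. -/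
/-!
Present `S` as the image of `π : ℕ^G → S`, `π c = ∑ cₐ • a`, for a finite generating set `G` of
nonzero elements. Since no generator is a unit, only `c = 0` maps to `0`; together with
`s +ᵥ t = t → s = 0` this makes the vectors `c` with `t = π c +ᵥ gᵢ` (for fixed `t` and `i`)
an antichain of `ℕ^G`, hence finite by Dickson's lemma. So the total degree `∑ cₐ` of such
representations of `t` is bounded, whereas `t = (s₁ + ⋯ + s_h) +ᵥ t'` with all `sⱼ ≠ 0`
yields one of total degree at least `h`.
-/

open Finset

theorem AddMonoid.FG.exists_finset_zero_notMem_closure_eq_top {S : Type*} [AddCommMonoid S]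
    (h : AddMonoid.FG S) : ∃ G : Finset S, 0 ∉ G ∧ AddSubmonoid.closure (G : Set S) = ⊤ := by
  classical
  obtain ⟨G, hG⟩ := h.fg_top
  refine ⟨G.erase 0, G.notMem_erase 0, ?_⟩
  rw [← hG, ← AddSubmonoid.closure_insert_zero, coe_erase, Set.insert_sdiff_singleton,
    AddSubmonoid.closure_insert_zero]

theorem Fintype.linearCombination_surjective_of_closure_eq_top {S ι : Type*} [AddCommMonoid S]
    [Fintype ι] {v : ι → S} (hv : AddSubmonoid.closure (Set.range v) = ⊤) :
    Function.Surjective (Fintype.linearCombination ℕ v) := by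
  rw [← span_range_eq_top_iff_surjective_fintypeLinearCombination,
    ← Submodule.toAddSubmonoid_inj, Submodule.span_nat_eq_addSubmonoidClosure, hv]
  rfl

theorem Fintype.linearCombination_eq_zero_iff_of_not_isAddUnit {S ι : Type*} [AddCommMonoid S]
    [Fintype ι] {v : ι → S} (hv : ∀ i, ¬ IsAddUnit (v i)) {c : ι → ℕ} :
    Fintype.linearCombination ℕ v c = 0 ↔ c = 0 := by
  refine ⟨fun hc => funext fun i => ?_, fun hc => hc ▸ map_zero _⟩
  have : IsAddUnit (c i • v i) :=
    IsAddUnit.sum_univ_iff.mp (Fintype.linearCombination_apply ℕ v c ▸ hc ▸ isAddUnit_zero) i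
  by_contra hi
  exact hv i ((isAddUnit_nsmul_iff hi).mp this)

section
variable {S T ι : Type*} [AddCommMonoid S] [AddAction S T]

theorem isAntichain_setOf_eq_vadd (f : (ι → ℕ) →+ S) (hf : ∀ c, f c = 0 → c = 0)
    (hfix : ∀ (s : S) (t : T), s +ᵥ t = t → s = 0) (t x : T) :
    IsAntichain (· ≤ ·) {c | t = f c +ᵥ x} := by
  intro c hc c' hc' hne hle
  have hdiff : f (c' - c) +ᵥ t = t := by
    rw [hc, ← add_vadd, ← map_add, tsub_add_cancel_of_le hle, ← hc', hc]
  exact hne (le_antisymm hle (tsub_eq_zero_iff_le.mp (hf _ (hfix _ _ hdiff))))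

theorem finite_setOf_exists_eq_vadd [Finite ι] {k : Type*} [Finite k] (f : (ι → ℕ) →+ S)
    (hf : ∀ c, f c = 0 → c = 0) (hfix : ∀ (s : S) (t : T), s +ᵥ t = t → s = 0) (t : T)
    (g : k → T) : {c | ∃ i, t = f c +ᵥ g i}.Finite := by
  rw [Set.ofPred_exists]
  exact Set.finite_iUnion fun i =>
    WellQuasiOrderedLE.finite_of_isAntichain (isAntichain_setOf_eq_vadd f hf hfix t (g i))

theorem exists_le_sum_apply_of_ne_zero [Fintype ι] {f : (ι → ℕ) →+ S}
    (hf : Function.Surjective f) {h : ℕ} (s : Fin h → S) (hs : ∀ i, s i ≠ 0) :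
    ∃ c, f c = ∑ i, s i ∧ h ≤ ∑ j, c j := by
  choose c hc using fun i => hf (s i)
  refine ⟨∑ i, c i, by simp only [map_sum, hc], ?_⟩
  have hpos : ∀ i, 1 ≤ ∑ j, c i j := fun i => Nat.one_le_iff_ne_zero.mpr fun h0 => hs i <| by
    rw [← hc, show c i = 0 from funext fun j => sum_eq_zero_iff.mp h0 j (mem_univ j), map_zero]
  calc h = ∑ _i : Fin h, 1 := by simp
    _ ≤ ∑ i, ∑ j, c i j := sum_le_sum fun i _ => hpos i
    _ = ∑ j, (∑ i, c i) j := by rw [sum_comm]; simp [Finset.sum_apply]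
end

/-- Let `S` be a finitely generated commutative additive monoid whose
only invertible element is `0`, and `T` a finitely generated `S`-module for which
`s +ᵥ t = t` forces `s = 0`. Then every element of `T` has finite level: for every
`t` there is `h : ℕ` such that `t` cannot be written as `(s₁ + ⋯ + s_h) +ᵥ t'` with
all `sᵢ ≠ 0`. -/
theorem stmt_2 {S T : Type*} [AddCommMonoid S] [AddAction S T]
    (hfgS : AddMonoid.FG S)
    (hunit : ∀ s : S, IsAddUnit s → s = 0)
    (k : ℕ) (g : Fin k → T)
    (hgen : ∀ t : T, ∃ (s : S) (i : Fin k), t = s +ᵥ g i)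
    (hfix : ∀ (s : S) (t : T), s +ᵥ t = t → s = 0) :
    ∀ t : T, ∃ h : ℕ, ¬ ∃ (s : Fin h → S) (t' : T),
      (∀ i, s i ≠ 0) ∧ t = (∑ i, s i) +ᵥ t' := by
  intro t
  obtain ⟨G, hG0, hG⟩ := hfgS.exists_finset_zero_notMem_closure_eq_top
  set f := (Fintype.linearCombination ℕ ((↑) : G → S)).toAddMonoidHom
  have hf_surj : Function.Surjective f :=
    Fintype.linearCombination_surjective_of_closure_eq_top (by rwa [Subtype.range_coe])
  have hf_ker : ∀ c, f c = 0 → c = 0 := fun c =>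
    (Fintype.linearCombination_eq_zero_iff_of_not_isAddUnit
      fun a ha => hG0 (hunit _ ha ▸ a.2)).mp
  obtain ⟨H, hH⟩ := ((finite_setOf_exists_eq_vadd f hf_ker hfix t g).image
    fun c => ∑ a, c a).bddAbove
  refine ⟨H + 1, fun ⟨s, t', hs, ht⟩ => ?_⟩
  obtain ⟨c, hc, hcH⟩ := exists_le_sum_apply_of_ne_zero hf_surj s hs
  obtain ⟨s', i, rfl⟩ := hgen t'
  obtain ⟨d, rfl⟩ := hf_surj s'
  have hcd : ∑ a, (c + d) a ≤ H := hH ⟨c + d, ⟨i, by rw [ht, map_add, hc, add_vadd]⟩, rfl⟩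
  simp only [Pi.add_apply, sum_add_distrib] at hcd
  omega
end

section
/- Let π : N → N̄ be a surjective homomorphism of abelian groups with finite kernel, let S be a submonoid of N, and let T̄ ⊆ N̄ be a subset satisfying π(S) + T̄ ⊆ T̄ that is finitely generated over the monoid π(S), i.e., T̄ = ⋃_{i=1}^k (π(S) + t̄_i) for finitely many t̄_i ∈ T̄. Then the preimage T := π^{-1}(T̄) satisfies S + T ⊆ T and is finitely generated over S: there exist finitely many g_1, …, g_m ∈ T with T = ⋃_{j=1}^m (S + g_j). -/
/-- Let `π : N → N'` be a surjective homomorphism of abelian groups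
with finite kernel, `S` a submonoid of `N`, and `T̄ ⊆ N'` a subset with
`π(S) + T̄ ⊆ T̄` that is a finite union of translates `π(S) + t̄ᵢ`. Then the preimage
`T = π⁻¹(T̄)` satisfies `S + T ⊆ T` and is a finite union of translates `S + gⱼ`. -/
theorem stmt_4 {N N' : Type*} [AddCommGroup N] [AddCommGroup N']
    (π : N →+ N') (hsurj : Function.Surjective π)
    (hker : {x : N | π x = 0}.Finite)
    (S : AddSubmonoid N) (Tbar : Set N')
    (hadd : ∀ s ∈ S, ∀ t ∈ Tbar, π s + t ∈ Tbar)
    (k : ℕ) (tbar : Fin k → N') (htbar : ∀ i, tbar i ∈ Tbar)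
    (hgen : Tbar = ⋃ i, (fun s => π s + tbar i) '' (S : Set N)) :
    (∀ s ∈ S, ∀ t ∈ π ⁻¹' Tbar, s + t ∈ π ⁻¹' Tbar) ∧
      ∃ (m : ℕ) (g : Fin m → N), (∀ j, g j ∈ π ⁻¹' Tbar) ∧
        π ⁻¹' Tbar = ⋃ j, (fun s => s + g j) '' (S : Set N) := by
  constructor
  · intro s hs t ht
    simp only [Set.mem_preimage, map_add] at ht ⊢
    exact hadd s hs (π t) ht
  · -- choose lifts of the tbar i
    choose n hn using fun i => hsurj (tbar i)
    haveI : Fintype {x : N | π x = 0} := hker.fintype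
    set ι := Fin k × {x : N | π x = 0}
    haveI : Fintype ι := inferInstance
    let e : Fin (Fintype.card ι) ≃ ι := (Fintype.equivFin ι).symm
    refine ⟨Fintype.card ι, fun j => n (e j).1 + ((e j).2 : N), ?_, ?_⟩
    · intro j
      simp only [Set.mem_preimage, map_add]
      have h2 : π ((e j).2 : N) = 0 := (e j).2.2
      rw [h2, add_zero, hn]
      exact htbar _
    · ext t
      simp only [Set.mem_preimage, Set.mem_iUnion, Set.mem_image, SetLike.mem_coe]
      constructor
      · intro ht
        rw [hgen] at ht
        simp only [Set.mem_iUnion, Set.mem_image, SetLike.mem_coe] at ht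
        obtain ⟨i, s, hs, hst⟩ := ht
        have hker' : π (t - s - n i) = 0 := by
          simp [map_sub, hn, ← hst]
        refine ⟨e.symm ⟨i, ⟨t - s - n i, hker'⟩⟩, s, hs, ?_⟩
        rw [e.apply_symm_apply]
        show s + (n i + (t - s - n i)) = t
        abel
      · rintro ⟨j, s, hs, rfl⟩
        have h2 : π ((e j).2 : N) = 0 := (e j).2.2
        simp only [map_add, h2, add_zero, hn]
        exact hadd s hs _ (htbar _)
end

section
/- Let F be a finite abelian group (written additively) and M a commutative additive monoid, and let F̂ = Hom(F, ℂˣ) denote the character group of F. Then the ℂ-algebra homomorphism Φ : ℂ[F × M] → ∏_{χ ∈ F̂} ℂ[M] from the monoid algebra of F × M to the product of copies of the monoid algebra of M, determined on basis elements by Φ(e_{(f,m)}) = (χ(f)·e_m)_{χ ∈ F̂}, is bijective. -/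
/-!
For a character `χ` of `F`, the element `e_χ = |F|⁻¹ ∑ₐ χ(-a) eₐ` of `ℂ[F]` is sent by
`Φ` to the `χ`-th standard idempotent of `∏_χ ℂ[M]`, by orthogonality of characters over `F`;
and `Φ` restricted to `ℂ[M] ⊆ ℂ[F × M]` is the diagonal embedding. Hence
`Ψ v = ∑_χ e_χ · v_χ` is a right inverse of `Φ`. Orthogonality over the characters gives the
Fourier inversion `∑_χ χ(a) e_χ = eₐ`, which says that `Ψ` is also a left inverse of `Φ`.
-/

open AddMonoidAlgebra Finset

namespace AddChar

def unitsMulEquiv {A M : Type*} [AddGroup A] [CommMonoid M] : AddChar A Mˣ ≃* AddChar A M :=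
  toMonoidHomMulEquiv.trans <| MonoidHom.toHomUnitsMulEquiv.symm.trans toMonoidHomMulEquiv.symm

@[simp]
lemma unitsMulEquiv_apply {A M : Type*} [AddGroup A] [CommMonoid M] (χ : AddChar A Mˣ) (a : A) :
    unitsMulEquiv χ a = χ a := rfl

variable {F : Type*} [AddCommGroup F] [Fintype F]

noncomputable instance : Fintype (AddChar F ℂˣ) := Fintype.ofEquiv _ unitsMulEquiv.toEquiv.symm

lemma sum_coe_units_apply_eq_ite [DecidableEq F] (a : F) :
    ∑ χ : AddChar F ℂˣ, (χ a : ℂ) = if a = 0 then (Fintype.card F : ℂ) else 0 := by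
  rw [← sum_apply_eq_ite]
  exact Fintype.sum_equiv unitsMulEquiv.toEquiv _ _ fun _ ↦ rfl

lemma sum_coe_units_neg_mul_eq_ite {R : Type*} [CommRing R] [IsDomain R]
    (χ χ' : AddChar F Rˣ) :
    ∑ a, (χ (-a) : R) * χ' a = if χ = χ' then (Fintype.card F : R) else 0 := by
  have h := sum_eq_ite (unitsMulEquiv (χ⁻¹ * χ'))
  simp only [unitsMulEquiv_apply, mul_apply, inv_apply, Units.val_mul] at h
  simp only [h, ← one_eq_zero, MulEquiv.map_eq_one_iff, inv_mul_eq_one]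

end AddChar

open AddChar

section CharIdempotent

variable {F : Type*} [AddCommGroup F] [Fintype F]

noncomputable def charIdempotent (χ : AddChar F ℂˣ) : ℂ[F] :=
  (Fintype.card F : ℂ)⁻¹ • ∑ a, (χ (-a) : ℂ) • single a 1

lemma sum_smul_charIdempotent (a : F) :
    ∑ χ : AddChar F ℂˣ, (χ a : ℂ) • charIdempotent χ = single a 1 := by
  classical
  have hcard : (Fintype.card F : ℂ) ≠ 0 := Nat.cast_ne_zero.2 Fintype.card_ne_zero
  calc ∑ χ : AddChar F ℂˣ, (χ a : ℂ) • charIdempotent χ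
      = (Fintype.card F : ℂ)⁻¹ •
          ∑ b, (∑ χ : AddChar F ℂˣ, (χ (a - b) : ℂ)) • single b (1 : ℂ) := by
        simp only [charIdempotent, sub_eq_add_neg, map_add_eq_mul, Units.val_mul, sum_smul,
          smul_sum, smul_smul, mul_left_comm _ (Fintype.card F : ℂ)⁻¹]
        exact sum_comm
    _ = (Fintype.card F : ℂ)⁻¹ • (Fintype.card F : ℂ) • single a 1 := by
        simp [sum_coe_units_apply_eq_ite, sub_eq_zero, ite_smul]
    _ = single a 1 := by rw [smul_smul, inv_mul_cancel₀ hcard, one_smul]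

end CharIdempotent

section CharTransform

variable {F M : Type*} [AddCommGroup F] [AddCommMonoid M]

noncomputable def charTransformInv [Fintype F] : (AddChar F ℂˣ → ℂ[M]) →ₗ[ℂ] ℂ[F × M] :=
  ∑ χ, LinearMap.mulLeft ℂ (mapDomainAlgHom ℂ ℂ (.inl F M) (charIdempotent χ)) ∘ₗ
    (mapDomainAlgHom ℂ ℂ (.inr F M)).toLinearMap ∘ₗ LinearMap.proj χ

lemma charTransformInv_apply [Fintype F] (v : AddChar F ℂˣ → ℂ[M]) :
    charTransformInv v = ∑ χ, mapDomainAlgHom ℂ ℂ (.inl F M) (charIdempotent χ) *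
      mapDomainAlgHom ℂ ℂ (.inr F M) (v χ) := by
  simp [charTransformInv]

variable (Φ : ℂ[F × M] →ₐ[ℂ] (AddChar F ℂˣ → ℂ[M]))
  (hΦ : ∀ (f : F) (m : M) (χ : AddChar F ℂˣ), Φ (single (f, m) 1) χ = single m (χ f : ℂ))

include hΦ

lemma apply_mapDomainAlgHom_inr (y : ℂ[M]) (χ : AddChar F ℂˣ) :
    Φ (mapDomainAlgHom ℂ ℂ (.inr F M) y) χ = y := by
  have h :
      (Pi.evalAlgHom ℂ _ χ).comp (Φ.comp (mapDomainAlgHom ℂ ℂ (.inr F M))) = .id ℂ ℂ[M] := by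
    ext m
    simp [hΦ]
  exact AlgHom.congr_fun h y

variable [Fintype F]

lemma apply_mapDomainAlgHom_inl_charIdempotent (χ : AddChar F ℂˣ) :
    Φ (mapDomainAlgHom ℂ ℂ (.inl F M) (charIdempotent χ)) = Pi.single χ 1 := by
  classical
  have hcard : (Fintype.card F : ℂ) ≠ 0 := Nat.cast_ne_zero.2 Fintype.card_ne_zero
  have hsingle (c : ℂ) : (single 0 c : ℂ[M]) = c • 1 := by rw [one_def, smul_single', mul_one]
  ext1 χ'
  simp only [charIdempotent, map_smul, map_sum, mapDomainAlgHom_apply, mapDomain_single,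
    AddMonoidHom.inl_apply, Pi.smul_apply, Finset.sum_apply, hΦ, hsingle, smul_smul, ← sum_smul,
    sum_coe_units_neg_mul_eq_ite, Pi.single_apply, eq_comm (a := χ')]
  split_ifs <;> simp [hcard]

lemma rightInverse_charTransformInv : Function.RightInverse charTransformInv Φ := by
  intro v
  ext1 χ'
  simp only [charTransformInv_apply, map_sum, map_mul, Finset.sum_apply, Pi.mul_apply,
    apply_mapDomainAlgHom_inl_charIdempotent Φ hΦ, apply_mapDomainAlgHom_inr Φ hΦ]
  simp [Pi.single_apply]

lemma leftInverse_charTransformInv : Function.LeftInverse charTransformInv Φ := by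
  suffices charTransformInv ∘ₗ Φ.toLinearMap = LinearMap.id from LinearMap.congr_fun this
  refine lhom_ext' fun ⟨a, m⟩ ↦ LinearMap.ext_ring ?_
  have hΦam : Φ (single (a, m) 1) = fun χ ↦ (χ a : ℂ) • single m 1 :=
    funext fun χ ↦ by rw [hΦ, smul_single', mul_one]
  simp only [LinearMap.comp_apply, AlgHom.toLinearMap_apply, lsingle_apply, hΦam,
    charTransformInv_apply, map_smul, mul_smul_comm, ← smul_mul_assoc, ← sum_mul]
  simp only [← map_smul, ← map_sum, sum_smul_charIdempotent]
  simp [single_mul_single]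

end CharTransform

/-- For a finite abelian group `F` and a commutative additive
monoid `M`, the `ℂ`-algebra homomorphism
`Φ : ℂ[F × M] → ∏_{χ ∈ F̂} ℂ[M]`, determined on basis elements by
`Φ(e_{(f,m)}) = (χ(f) • e_m)_χ`, is bijective. -/
theorem stmt_6 {F M : Type*} [AddCommGroup F] [Fintype F] [AddCommMonoid M]
    (Φ : AddMonoidAlgebra ℂ (F × M) →ₐ[ℂ] (AddChar F ℂˣ → AddMonoidAlgebra ℂ M))
    (hΦ : ∀ (f : F) (m : M) (χ : AddChar F ℂˣ),
      Φ (AddMonoidAlgebra.single (f, m) 1) χ =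
        AddMonoidAlgebra.single m ((χ f : ℂ))) :
    Function.Bijective Φ :=
  ⟨(leftInverse_charTransformInv Φ hΦ).injective,
    (rightInverse_charTransformInv Φ hΦ).surjective⟩
end

section
/- Let a_1, …, a_n ∈ ℤ^d be finitely many lattice vectors and let u ∈ ℤ^d. Then u belongs to the real convex cone ℝ_{≥0}a_1 + ⋯ + ℝ_{≥0}a_n ⊆ ℝ^d (i.e., u = Σ_j c_j a_j for some c_1, …, c_n ∈ ℝ_{≥0}) if and only if there exists an integer m ≥ 1 such that m·u lies in the submonoid ℕa_1 + ⋯ + ℕa_n of ℤ^d generated by a_1, …, a_n. -/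
/-!
Conic Carathéodory: if `u = ∑ cⱼ aⱼ` with `cⱼ ≥ 0`, one can move along a linear relation among
the `aⱼ` until a coefficient vanishes, so `u` is a nonnegative combination of a linearly
independent subfamily. Linear independence of integer vectors does not depend on whether it is
tested over `ℤ` or over `ℝ`; hence that subfamily together with `u` satisfies an integer relation
`k • u = ∑ zⱼ aⱼ` with `k > 0`, and uniqueness of real coordinates forces `zⱼ = k cⱼ ≥ 0`.
-/

open Finset

section ConicCaratheodory

variable {𝕜 V ι : Type*} [Field 𝕜] [LinearOrder 𝕜] [IsStrictOrderedRing 𝕜]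
  [AddCommGroup V] [Module 𝕜 V] [DecidableEq ι] (v : ι → V)

theorem exists_erase_nonneg_sum_eq_sum {s : Finset ι} {c w : ι → 𝕜} (hc : ∀ j ∈ s, 0 ≤ c j)
    (hw : ∑ j ∈ s, w j • v j = 0) (hpos : ∃ j ∈ s, 0 < w j) :
    ∃ j₀ ∈ s, ∃ c' : ι → 𝕜, (∀ j ∈ s.erase j₀, 0 ≤ c' j) ∧
      ∑ j ∈ s.erase j₀, c' j • v j = ∑ j ∈ s, c j • v j := by
  obtain ⟨i, his, hwi⟩ := hpos
  -- `c - r • w` with `r` the least ratio `c j / w j` over `w j > 0` stays nonnegative.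
  obtain ⟨j₀, hj₀, hmin⟩ := exists_min_image (s.filter fun j => 0 < w j) (fun j => c j / w j)
    ⟨i, mem_filter.2 ⟨his, hwi⟩⟩
  rw [mem_filter] at hj₀
  set r := c j₀ / w j₀
  have hr : 0 ≤ r := div_nonneg (hc _ hj₀.1) hj₀.2.le
  refine ⟨j₀, hj₀.1, fun j => c j - r * w j, fun j hj => ?_, ?_⟩
  · have hjs := mem_of_mem_erase hj
    rcases le_or_gt (w j) 0 with hwj | hwj
    · nlinarith [hc j hjs]
    · exact sub_nonneg.2 ((le_div_iff₀ hwj).1 (hmin j (mem_filter.2 ⟨hjs, hwj⟩)))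
  · rw [sum_erase s (by simp [r, div_mul_cancel₀ _ hj₀.2.ne'])]
    simp only [sub_smul, mul_smul, sum_sub_distrib, ← smul_sum, hw, smul_zero, sub_zero]

theorem exists_linearIndepOn_nonneg_sum_eq_sum (s : Finset ι) (c : ι → 𝕜)
    (hc : ∀ j ∈ s, 0 ≤ c j) :
    ∃ t ⊆ s, LinearIndepOn 𝕜 v (t : Set ι) ∧
      ∃ c' : ι → 𝕜, (∀ j ∈ t, 0 ≤ c' j) ∧ ∑ j ∈ t, c' j • v j = ∑ j ∈ s, c j • v j := by
  induction s using Finset.strongInduction generalizing c with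
  | H s ih =>
  by_cases hli : LinearIndepOn 𝕜 v (s : Set ι)
  · exact ⟨s, subset_rfl, hli, c, hc, rfl⟩
  obtain ⟨w, hw, i, his, hwi⟩ := not_linearIndepOn_finset_iff.1 hli
  obtain ⟨j₀, hj₀, c', hc', hsum⟩ : ∃ j₀ ∈ s, ∃ c' : ι → 𝕜, (∀ j ∈ s.erase j₀, 0 ≤ c' j) ∧
      ∑ j ∈ s.erase j₀, c' j • v j = ∑ j ∈ s, c j • v j := by
    rcases hwi.lt_or_gt with hneg | hpos
    · exact exists_erase_nonneg_sum_eq_sum v (w := -w) hc (by simp [hw]) ⟨i, his, neg_pos.2 hneg⟩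
    · exact exists_erase_nonneg_sum_eq_sum v hc hw ⟨i, his, hpos⟩
  obtain ⟨t, hts, ht, c'', hc'', htsum⟩ := ih _ (erase_ssubset hj₀) c' hc'
  exact ⟨t, hts.trans (erase_subset _ _), ht, c'', hc'', htsum.trans hsum⟩

end ConicCaratheodory

section IntegerRelation

variable {K ι κ : Type*} [Field K] [CharZero K] [Fintype ι] [Finite κ] {v : ι → κ → ℤ} {u : κ → ℤ}

theorem exists_pos_zsmul_eq_sum_of_mem_span (hv : LinearIndependent K fun j i => (v j i : K))
    (hu : (fun i => (u i : K)) ∈ Submodule.span K (Set.range fun j i => (v j i : K))) :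
    ∃ k : ℤ, 0 < k ∧ ∃ z : ι → ℤ, k • u = ∑ j, z j • v j := by
  have hvℤ : LinearIndependent ℤ v := by
    rw [← linearIndependent_algebraMap_comp_iff (S := K)]
    simpa [Function.comp_def] using hv
  have hdep : ¬ LinearIndependent ℤ (fun o : Option ι => Option.casesOn' o u v) := by
    rw [← linearIndependent_algebraMap_comp_iff (S := K)]
    intro h
    have hcast : (fun o : Option ι => algebraMap ℤ K ∘ Option.casesOn' o u v) =
        fun o => Option.casesOn' o (fun i => (u i : K)) fun j i => (v j i : K) := by
      ext (_ | _) <;> simp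
    rw [hcast, linearIndependent_option'] at h
    exact h.2 hu
  obtain ⟨g, hg, o, ho⟩ := Fintype.not_linearIndependent_iff.1 hdep
  rw [Fintype.sum_option] at hg
  have hg0 : g none ≠ 0 := by
    intro h0
    have hrel := Fintype.linearIndependent_iff.1 hvℤ (fun j => g (some j)) (by simpa [h0] using hg)
    cases o with
    | none => exact ho h0
    | some j => exact ho (hrel j)
  rcases hg0.lt_or_gt with hneg | hpos
  · refine ⟨-g none, neg_pos.2 hneg, fun j => g (some j), ?_⟩
    simpa [neg_smul, neg_eq_iff_add_eq_zero] using hg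
  · refine ⟨g none, hpos, fun j => -g (some j), ?_⟩
    simpa [neg_smul, sum_neg_distrib, eq_neg_iff_add_eq_zero] using hg

theorem exists_pos_zsmul_eq_sum_of_eq_sum {c : ι → K}
    (hv : LinearIndependent K fun j i => (v j i : K))
    (hu : (fun i => (u i : K)) = ∑ j, c j • fun i => (v j i : K)) :
    ∃ k : ℤ, 0 < k ∧ ∃ z : ι → ℤ, k • u = ∑ j, z j • v j ∧ ∀ j, (z j : K) = k * c j := by
  obtain ⟨k, hk, z, hkz⟩ := exists_pos_zsmul_eq_sum_of_mem_span hv <|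
    hu ▸ Submodule.sum_mem _ fun j _ => Submodule.smul_mem _ _ (Submodule.subset_span (Set.mem_range_self j))
  refine ⟨k, hk, z, hkz, fun j => Fintype.linearIndependent_iffₛ.1 hv (fun j => (z j : K)) (fun j => k * c j) ?_ j⟩
  calc ∑ j, (z j : K) • (fun i => (v j i : K)) = (k : K) • fun i => (u i : K) := by
        ext i; simpa [Finset.sum_apply, mul_comm] using congr(($(congrFun hkz i) : K)).symm
    _ = ∑ j, ((k : K) * c j) • fun i => (v j i : K) := by simp only [hu, smul_sum, mul_smul]

end IntegerRelation

/-- For lattice vectors `a₁, …, aₙ ∈ ℤ^d` and `u ∈ ℤ^d`, the vector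
`u` lies in the real cone `ℝ_{≥0}a₁ + ⋯ + ℝ_{≥0}aₙ` if and only if some positive
integer multiple `m • u` lies in the submonoid `ℕa₁ + ⋯ + ℕaₙ` of `ℤ^d`. -/
theorem stmt_9 {d n : ℕ} (a : Fin n → (Fin d → ℤ)) (u : Fin d → ℤ) :
    (∃ c : Fin n → ℝ, (∀ j, 0 ≤ c j) ∧
        (fun i => (u i : ℝ)) = ∑ j, c j • (fun i => (a j i : ℝ))) ↔
      (∃ m : ℕ, 1 ≤ m ∧ ∃ p : Fin n → ℕ, m • u = ∑ j, p j • a j) := by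
  constructor
  · rintro ⟨c, hc, hu⟩
    obtain ⟨t, -, ht, c', hc', hsum⟩ :=
      exists_linearIndepOn_nonneg_sum_eq_sum (fun j i => (a j i : ℝ)) univ c fun j _ => hc j
    rw [← hu, ← sum_coe_sort t] at hsum
    obtain ⟨k, hk, z, hkz, hzc⟩ := exists_pos_zsmul_eq_sum_of_eq_sum ht hsum.symm
    have hz : ∀ j, 0 ≤ z j := fun j => by
      have : (0 : ℝ) ≤ z j := hzc j ▸ mul_nonneg (by positivity) (hc' j j.2)
      exact_mod_cast this
    refine ⟨k.toNat, by omega, fun j => if h : j ∈ t then (z ⟨j, h⟩).toNat else 0, ?_⟩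
    rw [← sum_subset (subset_univ t) fun j _ hj => by simp [hj], ← sum_coe_sort t,
      ← natCast_zsmul, Int.toNat_of_nonneg hk.le, hkz]
    refine sum_congr rfl fun j _ => ?_
    dsimp only
    rw [dif_pos (coe_mem j), ← natCast_zsmul, Int.toNat_of_nonneg (hz j)]
  · rintro ⟨m, hm, p, hp⟩
    refine ⟨fun j => (p j : ℝ) / m, fun j => by positivity, ?_⟩
    ext i
    have hpi : (m : ℝ) * u i = ∑ j, (p j : ℝ) * a j i := by
      simpa [Finset.sum_apply] using congr(($(congrFun hp i) : ℝ))
    simp [Finset.sum_apply, div_mul_eq_mul_div, ← sum_div, ← hpi]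
    field_simp
end

section
/- Let A be an integer d×n matrix with columns a_1, …, a_n ∈ ℤ^d, let ρ : ker A → ℂˣ be a group homomorphism on ker A = {w ∈ ℤ^n : A·w = 0}, and let I_{A,ρ} ⊆ ℂ[x_1,…,x_n] be the ideal generated by the binomials x^u − ρ(u−v)·x^v over all u, v ∈ ℕ^n with u − v ∈ ker A. Then every A-homogeneous polynomial f ∈ ℂ[x_1,…,x_n] is congruent modulo I_{A,ρ} to c·x^u for some scalar c ∈ ℂ and some monomial x^u; consequently, for every b ∈ ℤ^d the image in ℂ[x_1,…,x_n]/I_{A,ρ} of the span of the monomials of A-degree b is a ℂ-vector space of dimension at most 1. -/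
open MvPolynomial

lemma aux_prod_X_pow {n : ℕ} (e : Fin n →₀ ℕ) :
    (∏ j, MvPolynomial.X j ^ e j : MvPolynomial (Fin n) ℂ) = MvPolynomial.monomial e 1 := by
  rw [← MvPolynomial.prod_X_pow_eq_monomial]
  exact (Finset.prod_subset (Finset.subset_univ _) (by
    intro x _ hx
    simp [Finsupp.notMem_support_iff.mp hx])).symm

/-- Let `a₁, …, aₙ ∈ ℤ^d` be the columns of an integer matrix `A`,
`ρ` a character on `ker A = {w : A·w = 0}`, and `I_{A,ρ}` the ideal generated by the
binomials `x^u − ρ(u−v)·x^v` over `u, v ∈ ℕ^n` with `u − v ∈ ker A`. Then every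
`A`-homogeneous polynomial is congruent modulo `I_{A,ρ}` to a scalar multiple of a
monomial; consequently for every `b ∈ ℤ^d` the image in the quotient of the span of
the monomials of `A`-degree `b` has dimension at most `1`. -/
theorem stmt_10 {d n : ℕ} (a : Fin n → (Fin d → ℤ))
    (ρ : (Fin n → ℤ) → ℂˣ)
    (hρ0 : ρ 0 = 1)
    (hρ : ∀ w w' : Fin n → ℤ, (∑ j, w j • a j) = 0 → (∑ j, w' j • a j) = 0 →
      ρ (w + w') = ρ w * ρ w')
    (I : Ideal (MvPolynomial (Fin n) ℂ))
    (hI : I = Ideal.span { f : MvPolynomial (Fin n) ℂ | ∃ u v : Fin n → ℕ,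
      (∑ j, ((u j : ℤ) - (v j : ℤ)) • a j) = 0 ∧
      f = (∏ j, MvPolynomial.X j ^ u j) -
        ((ρ (fun j => (u j : ℤ) - (v j : ℤ)) : ℂ)) •
          ∏ j, MvPolynomial.X j ^ v j }) :
    (∀ (f : MvPolynomial (Fin n) ℂ) (b : Fin d → ℤ),
      (∀ e ∈ f.support, (∑ j, (e j : ℤ) • a j) = b) →
      ∃ (c : ℂ) (u : Fin n → ℕ),
        f - c • ∏ j, MvPolynomial.X j ^ u j ∈ I) ∧
    (∀ b : Fin d → ℤ,
      Module.rank ℂ (Submodule.map (Ideal.Quotient.mkₐ ℂ I).toLinearMap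
        (Submodule.span ℂ { f : MvPolynomial (Fin n) ℂ |
          ∃ u : Fin n → ℕ, (∑ j, (u j : ℤ) • a j) = b ∧
            f = ∏ j, MvPolynomial.X j ^ u j })) ≤ 1) := by
  -- key lemma: binomials of equal A-degree lie in I
  have key : ∀ (u v : Fin n → ℕ), (∑ j, ((u j : ℤ) - (v j : ℤ)) • a j) = 0 →
      (∏ j, MvPolynomial.X j ^ u j) -
        ((ρ (fun j => (u j : ℤ) - (v j : ℤ)) : ℂ)) •
          (∏ j, MvPolynomial.X j ^ v j) ∈ I := by
    intro u v h
    rw [hI]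
    exact Ideal.subset_span ⟨u, v, h, rfl⟩
  have part1 : ∀ (f : MvPolynomial (Fin n) ℂ) (b : Fin d → ℤ),
      (∀ e ∈ f.support, (∑ j, (e j : ℤ) • a j) = b) →
      ∃ (c : ℂ) (u : Fin n → ℕ),
        f - c • ∏ j, MvPolynomial.X j ^ u j ∈ I := by
    intro f b hf
    by_cases h0 : f = 0
    · exact ⟨0, 0, by simp [h0]⟩
    · obtain ⟨e₀, he₀⟩ := (MvPolynomial.support_nonempty.mpr h0)
      refine ⟨∑ e ∈ f.support, f.coeff e *
        (ρ (fun j => (e j : ℤ) - (e₀ j : ℤ)) : ℂ), (e₀ : Fin n → ℕ), ?_⟩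
      have hf' : f = ∑ e ∈ f.support, f.coeff e • (monomial e (1:ℂ)) := by
        conv_lhs => rw [f.as_sum]
        refine Finset.sum_congr rfl fun e _ => ?_
        rw [smul_monomial, smul_eq_mul, mul_one]
      nth_rewrite 1 [hf']
      rw [Finset.sum_smul, ← Finset.sum_sub_distrib]
      refine Submodule.sum_mem _ fun e he => ?_
      have hdeg : (∑ j, ((e j : ℤ) - (e₀ j : ℤ)) • a j) = 0 := by
        have h1 := hf e he
        have h2 := hf e₀ he₀
        simp only [sub_smul, Finset.sum_sub_distrib, h1, h2, sub_self]
      have hmem := key (e : Fin n → ℕ) (e₀ : Fin n → ℕ) hdeg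
      rw [aux_prod_X_pow, aux_prod_X_pow] at hmem
      have : f.coeff e • monomial e (1:ℂ) -
          (f.coeff e * (ρ (fun j => (e j : ℤ) - (e₀ j : ℤ)) : ℂ)) •
            (∏ j, MvPolynomial.X j ^ e₀ j) =
          MvPolynomial.C (f.coeff e) *
            ((monomial e (1:ℂ)) - (ρ (fun j => (e j : ℤ) - (e₀ j : ℤ)) : ℂ) •
              (monomial e₀ (1:ℂ))) := by
        rw [aux_prod_X_pow]
        simp only [MvPolynomial.smul_eq_C_mul, map_mul]
        ring
      rw [this]
      exact I.mul_mem_left _ hmem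
  refine ⟨part1, fun b => ?_⟩
  set S := { f : MvPolynomial (Fin n) ℂ |
      ∃ u : Fin n → ℕ, (∑ j, (u j : ℤ) • a j) = b ∧
        f = ∏ j, MvPolynomial.X j ^ u j } with hS
  by_cases hne : S.Nonempty
  · obtain ⟨f₀, u₀, hu₀, hf₀⟩ := hne
    have hle : Submodule.map (Ideal.Quotient.mkₐ ℂ I).toLinearMap (Submodule.span ℂ S) ≤
        Submodule.span ℂ {Ideal.Quotient.mkₐ ℂ I f₀} := by
      rw [Submodule.map_span]
      refine Submodule.span_le.mpr ?_
      rintro g ⟨f, ⟨u, hu, rfl⟩, rfl⟩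
      have hdeg : (∑ j, ((u j : ℤ) - (u₀ j : ℤ)) • a j) = 0 := by
        simp only [sub_smul, Finset.sum_sub_distrib, hu, hu₀, sub_self]
      have hmem := key u u₀ hdeg
      rw [SetLike.mem_coe, Submodule.mem_span_singleton]
      refine ⟨(ρ (fun j => (u j : ℤ) - (u₀ j : ℤ)) : ℂ), ?_⟩
      have : (Ideal.Quotient.mkₐ ℂ I) ((∏ j, MvPolynomial.X j ^ u j) -
          ((ρ (fun j => (u j : ℤ) - (u₀ j : ℤ)) : ℂ)) •
            (∏ j, MvPolynomial.X j ^ u₀ j)) = 0 := by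
        rwa [Ideal.Quotient.mkₐ_eq_mk, Ideal.Quotient.eq_zero_iff_mem]
      rw [map_sub, map_smul, sub_eq_zero] at this
      simp only [AlgHom.toLinearMap_apply]
      rw [hf₀, this]
    calc Module.rank ℂ _ ≤ Module.rank ℂ (Submodule.span ℂ {Ideal.Quotient.mkₐ ℂ I f₀}) :=
          Submodule.rank_mono hle
      _ ≤ 1 := by simpa using rank_span_le (R := ℂ) {Ideal.Quotient.mkₐ ℂ I f₀}
  · rw [Set.not_nonempty_iff_eq_empty] at hne
    rw [hne, Submodule.span_empty, Submodule.map_bot]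
    simp [rank_bot]
end

section
/- Let A be an integer d×n matrix with columns a_1, …, a_n ∈ ℤ^d spanning ℤ^d as a group and such that the cone C = ℝ_{≥0}a_1 + ⋯ + ℝ_{≥0}a_n satisfies C ∩ (−C) = {0}. Let ρ : ker A → ℂˣ be a group homomorphism and I_{A,ρ} ⊆ ℂ[x_1,…,x_n] the ideal generated by the binomials x^u − ρ(u−v)·x^v over all u, v ∈ ℕ^n with u − v ∈ ker A. If 𝔭 ⊆ ℂ[x_1,…,x_n] is a prime ideal that contains I_{A,ρ} and is homogeneous with respect to the ℤ^d-grading given by deg(x_j) = a_j, then there exist a subset σ ⊆ {1,…,n} and a linear functional φ : ℝ^d → ℝ with φ(a_j) = 0 for all j ∈ σ and φ(a_j) > 0 for all j ∉ σ, such that 𝔭 equals the sum of I_{A,ρ} and the ideal generated by the variables {x_j : j ∉ σ}. -/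
/-!
Let `σ` be the set of variables not in `𝔭`. An integer relation `∑ zⱼ aⱼ = 0` with `zⱼ ≥ 0` off `σ`
splits as `z = u - v` with `v` supported on `σ`; the binomial `x^u - ρ(z) x^v` lies in `𝔭`, so if
some `zⱼ > 0` off `σ` then `x^u ∈ 𝔭`, hence `x^v ∈ 𝔭`, which is impossible for a monomial in
variables outside the prime `𝔭`. Rational points are dense in the real kernel of a rational
matrix, so the same holds for real relations, and Hahn–Banach, separating the convex hull of
`{aⱼ : j ∉ σ}` from the span of `{aⱼ : j ∈ σ}`, yields `φ`. Finally, modulo `⟨xⱼ : j ∉ σ⟩` a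
homogeneous element of `𝔭` is a combination of monomials in the variables of `σ` of a single
degree, which modulo `I_{A,ρ}` is a multiple of one such monomial; that multiple lies in `𝔭`,
so it is zero.
-/

open Matrix MvPolynomial

theorem LinearMap.exists_comp_comp_eq_self {K V W : Type*} [Field K] [AddCommGroup V]
    [Module K V] [AddCommGroup W] [Module K W] (f : V →ₗ[K] W) :
    ∃ g : W →ₗ[K] V, f ∘ₗ g ∘ₗ f = f := by
  obtain ⟨C, hC⟩ := (ker f).exists_isCompl
  have hinj : ker (f ∘ₗ C.subtype) = ⊥ := by
    rw [ker_comp, ← Submodule.disjoint_iff_comap_eq_bot]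
    exact hC.symm.disjoint
  obtain ⟨g, hg⟩ := (f ∘ₗ C.subtype).exists_leftInverse_of_injective hinj
  refine ⟨C.subtype ∘ₗ g, LinearMap.ext fun v => ?_⟩
  obtain ⟨k, hk, c, hc, rfl⟩ := Submodule.mem_sup.1 (hC.sup_eq_top ▸ Submodule.mem_top (x := v))
  have hgc : g (f c) = ⟨c, hc⟩ := LinearMap.congr_fun hg ⟨c, hc⟩
  simp [mem_ker.1 hk, hgc]

theorem Matrix.exists_mul_mul_eq_self {m n K : Type*} [Fintype m] [Fintype n] [Field K]
    (M : Matrix m n K) : ∃ G : Matrix n m K, M * G * M = M := by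
  classical
  obtain ⟨g, hg⟩ := (toLin' M).exists_comp_comp_eq_self
  refine ⟨LinearMap.toMatrix' g, toLin'.injective ?_⟩
  simpa [Matrix.toLin'_mul, LinearMap.comp_assoc] using hg

section RationalPoints

variable {k m : Type*} [Fintype k] [Fintype m]

theorem Matrix.exists_rat_vecMul_eq_zero_mem (M : Matrix k m ℚ) {x : k → ℝ}
    (hx : x ᵥ* M.map (↑) = 0) {U : Set (k → ℝ)} (hU : IsOpen U) (hxU : x ∈ U) :
    ∃ q : k → ℚ, q ᵥ* M = 0 ∧ (fun j => (q j : ℝ)) ∈ U := by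
  classical
  obtain ⟨G, hG⟩ := M.exists_mul_mul_eq_self
  -- `P` maps rational vectors into the rational kernel and fixes the real kernel.
  set P : Matrix k k ℚ := 1 - M * G
  have hPM : P * M = 0 := by
    change (1 - M * G) * M = 0
    rw [Matrix.sub_mul, Matrix.one_mul, hG, sub_self]
  have hPx : x ᵥ* P.map (↑) = x := by
    have hcast : P.map (Rat.cast : ℚ → ℝ) =
        1 - (M.map Rat.cast : Matrix k m ℝ) * (G.map Rat.cast : Matrix m k ℝ) := by
      ext i j
      simp [P, Matrix.mul_apply, Matrix.one_apply, apply_ite]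
    rw [hcast, Matrix.vecMul_sub, ← Matrix.vecMul_vecMul, hx, Matrix.zero_vecMul,
      Matrix.vecMul_one, sub_zero]
  have hV : IsOpen {y : k → ℝ | y ᵥ* P.map (↑) ∈ U} :=
    hU.preimage (Continuous.matrix_vecMul continuous_id continuous_const)
  obtain ⟨q, hq⟩ := (DenseRange.piMap fun _ => Rat.denseRange_cast).exists_mem_open hV
    ⟨x, by simpa [hPx] using hxU⟩
  refine ⟨q ᵥ* P, by rw [Matrix.vecMul_vecMul, hPM, Matrix.vecMul_zero], ?_⟩
  have hcast : (fun j => ((q ᵥ* P) j : ℝ)) = (fun j => (q j : ℝ)) ᵥ* P.map (↑) :=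
    funext (RingHom.map_vecMul (Rat.castHom ℝ) P q)
  rwa [hcast]

theorem Matrix.exists_rat_vecMul_eq_zero_sign_eq (M : Matrix k m ℚ) {x : k → ℝ}
    (hx : x ᵥ* M.map (↑) = 0) :
    ∃ q : k → ℚ, q ᵥ* M = 0 ∧ ∀ j, SignType.sign (q j) = SignType.sign (x j) := by
  classical
  -- Zeroing the rows where `x` vanishes leaves only open sign conditions.
  set D : Matrix k k ℚ := diagonal fun j => if x j = 0 then 0 else 1
  have hxD : x ᵥ* D.map (↑) = x := by
    funext j
    by_cases hj : x j = 0 <;> simp [D, Matrix.vecMul_diagonal, hj]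
  have hU : IsOpen {y : k → ℝ | ∀ j, x j ≠ 0 → 0 < y j * x j} := by
    simp only [Set.ofPred_forall]
    exact isOpen_iInter_of_finite fun j => isOpen_iInter_of_finite fun _ =>
      isOpen_lt continuous_const ((continuous_apply j).mul continuous_const)
  have hDM : x ᵥ* (D * M).map (↑) = 0 := by
    have hcast : (D * M).map (Rat.cast : ℚ → ℝ) =
        (D.map Rat.cast : Matrix k k ℝ) * (M.map Rat.cast : Matrix k m ℝ) :=
      Matrix.map_mul (f := Rat.castHom ℝ)
    rw [hcast, ← Matrix.vecMul_vecMul, hxD, hx]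
  obtain ⟨q, hqM, hq⟩ :=
    (D * M).exists_rat_vecMul_eq_zero_mem hDM hU fun j hj => mul_self_pos.2 hj
  refine ⟨q ᵥ* D, by rw [Matrix.vecMul_vecMul, hqM], fun j => ?_⟩
  by_cases hj : x j = 0
  · simp [D, Matrix.vecMul_diagonal, hj]
  · have hqD : (q ᵥ* D) j = q j := by simp [D, Matrix.vecMul_diagonal, hj]
    rw [hqD]
    rcases pos_and_pos_or_neg_and_neg_of_mul_pos (hq j hj) with ⟨hq, hx⟩ | ⟨hq, hx⟩
    · rw [sign_pos (Rat.cast_pos.1 hq), sign_pos hx]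
    · rw [sign_neg (Rat.cast_lt_zero.1 hq), sign_neg hx]

theorem Rat.exists_pos_nat_mul_eq_intCast (q : k → ℚ) :
    ∃ N : ℕ, 0 < N ∧ ∃ z : k → ℤ, ∀ j, (z j : ℚ) = N * q j := by
  classical
  refine ⟨∏ l, (q l).den, Finset.prod_pos fun l _ => (q l).pos,
    fun j => (∏ l ∈ Finset.univ.erase j, ((q l).den : ℤ)) * (q j).num, fun j => ?_⟩
  push_cast
  rw [← Finset.mul_prod_erase _ _ (Finset.mem_univ j), mul_comm ((q j).den : ℚ), mul_assoc,
    Rat.den_mul_eq_num]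

theorem exists_int_sum_smul_eq_zero_sign_eq {ι : Type*} [Fintype ι] (a : ι → m → ℤ)
    {x : ι → ℝ} (hx : ∑ j, x j • (fun i => (a j i : ℝ)) = 0) :
    ∃ z : ι → ℤ, ∑ j, z j • a j = 0 ∧ ∀ j, SignType.sign (z j) = SignType.sign (x j) := by
  set M : Matrix ι m ℚ := of fun j i => (a j i : ℚ)
  have hxM : x ᵥ* M.map (↑) = 0 := by
    rw [← hx]
    ext i
    simp [M, vecMul, dotProduct, Finset.sum_apply]
  obtain ⟨q, hqM, hq⟩ := M.exists_rat_vecMul_eq_zero_sign_eq hxM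
  obtain ⟨N, hN, z, hz⟩ := Rat.exists_pos_nat_mul_eq_intCast q
  refine ⟨z, funext fun i => Int.cast_injective (α := ℚ) ?_, fun j => ?_⟩
  · have hqi := congrFun hqM i
    simp only [vecMul, dotProduct, M, of_apply, Pi.zero_apply] at hqi
    simp [Finset.sum_apply, hz, mul_assoc, ← Finset.mul_sum, hqi]
  · rw [← hq j, ← sign_intCast (α := ℚ), hz, sign_mul, sign_pos (by exact_mod_cast hN), one_mul]

end RationalPoints

theorem LinearMap.apply_eq_zero_of_forall_lt_apply {𝕜 M : Type*} [Field 𝕜] [Preorder 𝕜]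
    [AddCommGroup M] [Module 𝕜 M] (f : M →ₗ[𝕜] 𝕜) {W : Submodule 𝕜 M} {c : 𝕜}
    (h : ∀ w ∈ W, c < f w) {w : M} (hw : w ∈ W) : f w = 0 := by
  by_contra hfw
  have := h ((c / f w) • w) (W.smul_mem _ hw)
  rw [map_smul, smul_eq_mul, div_mul_cancel₀ _ hfw] at this
  exact lt_irrefl c this

theorem exists_strongDual_eq_zero_and_pos {ι E : Type*} [Fintype ι] [NormedAddCommGroup E]
    [NormedSpace ℝ E] (v : ι → E) (s : Set ι)
    (h : ∀ x : ι → ℝ, ∑ j, x j • v j = 0 → (∀ j ∉ s, 0 ≤ x j) → ∀ j ∉ s, x j = 0) :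
    ∃ φ : StrongDual ℝ E, (∀ j ∈ s, φ (v j) = 0) ∧ ∀ j ∉ s, 0 < φ (v j) := by
  classical
  set L := Fintype.linearCombination ℝ v
  set Δ : Set (ι → ℝ) := stdSimplex ℝ ι ∩ {c | ∀ j ∈ s, c j = 0}
  set W := Submodule.span ℝ (v '' s)
  have hΔconv : Convex ℝ Δ := (convex_stdSimplex ℝ ι).inter fun c hc c' hc' t t' _ _ _ j hj => by
    simp [hc j hj, hc' j hj]
  have hΔcomp : IsCompact Δ := (isCompact_stdSimplex ℝ ι).inter_right <| by
    simp only [Set.ofPred_forall]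
    exact isClosed_iInter fun j => isClosed_iInter fun _ => isClosed_eq (continuous_apply j)
      continuous_const
  have hW : IsClosed (W : Set E) :=
    have := FiniteDimensional.span_of_finite ℝ
      ((Set.finite_range v).subset (Set.image_subset_range v s))
    W.closed_of_finiteDimensional
  -- A common point is a relation `∑ (cⱼ - μⱼ) vⱼ = 0` with `c ∈ Δ` and `μ` supported on `s`.
  have hdisj : Disjoint (L '' Δ) W := by
    refine Set.disjoint_left.2 ?_
    rintro _ ⟨c, ⟨hcΔ, hcs⟩, rfl⟩ hcW
    obtain ⟨μ, hμs, hμ⟩ := (Finsupp.mem_span_image_iff_linearCombination ℝ).1 hcW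
    have hμs' := (Finsupp.mem_supported' ℝ μ).1 hμs
    have hrel := h (c - μ) (by
      rw [Finsupp.linearCombination_apply, Finsupp.sum_fintype _ _ fun j => zero_smul ℝ (v j)] at hμ
      simp [sub_smul, Finset.sum_sub_distrib, hμ, L, Fintype.linearCombination_apply])
      fun j hj => by simpa [hμs' j hj] using hcΔ.1 j
    have : ∑ j, c j = 0 := Finset.sum_eq_zero fun j _ => by
      by_cases hj : j ∈ s
      · exact hcs j hj
      · simpa [hμs' j hj] using hrel j hj
    simpa [this] using hcΔ.2
  obtain ⟨f, u, u', hfK, huu', hfW⟩ := geometric_hahn_banach_compact_closed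
    (hΔconv.linear_image L) (hΔcomp.image L.continuous_of_finiteDimensional) W.convex hW hdisj
  have hfW0 : ∀ w ∈ W, f w = 0 := fun w hw =>
    (f : E →ₗ[ℝ] ℝ).apply_eq_zero_of_forall_lt_apply hfW hw
  have hu : u < 0 := by linarith [hfW 0 W.zero_mem, map_zero f]
  refine ⟨-f, fun j hj => by simp [hfW0 _ (Submodule.subset_span ⟨j, hj, rfl⟩)], fun j hj => ?_⟩
  have hvK : v j ∈ L '' Δ := ⟨Pi.single j 1, ⟨single_mem_stdSimplex ℝ j, fun l hl => by
    simp [show l ≠ j from fun h => hj (h ▸ hl)]⟩, by simp [L]⟩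
  simp only [_root_.neg_apply]
  linarith [hfK _ hvK]

theorem Ideal.IsPrime.prod_pow_notMem {R ι : Type*} [CommRing R] [Fintype ι] {P : Ideal R}
    (hP : P.IsPrime) {x : ι → R} {e : ι → ℕ} (h : ∀ j, e j ≠ 0 → x j ∉ P) :
    ∏ j, x j ^ e j ∉ P := by
  rw [Ideal.IsPrime.prod_mem_iff]
  rintro ⟨j, -, hj⟩
  by_cases he : e j = 0
  · exact hP.ne_top ((Ideal.eq_top_iff_one P).2 (by simpa [he] using hj))
  · exact h j he ((hP.pow_mem_iff_mem _ (Nat.pos_of_ne_zero he)).1 hj)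

theorem MvPolynomial.prod_X_pow_eq_monomial_one {K ι : Type*} [CommSemiring K] [Fintype ι]
    (e : ι →₀ ℕ) : ∏ j, X j ^ e j = (monomial e 1 : MvPolynomial ι K) := by
  rw [monomial_eq, C_1, one_mul, Finsupp.prod_fintype _ _ fun j => pow_zero _]

section TwistedToric

variable {K ι Λ : Type*} [CommRing K] [Fintype ι] [AddCommGroup Λ]

/-- The ideal `I_{A,ρ}`, where the columns of `A` are the `a j`. -/
noncomputable def twistedToricIdeal (a : ι → Λ) (ρ : (ι → ℤ) → Kˣ) : Ideal (MvPolynomial ι K) :=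
  Ideal.span {f | ∃ u v : ι → ℕ, (∑ j, ((u j : ℤ) - (v j : ℤ)) • a j) = 0 ∧
    f = (∏ j, X j ^ u j) - ((ρ (fun j => (u j : ℤ) - (v j : ℤ)) : K)) • ∏ j, X j ^ v j}

variable {a : ι → Λ} {ρ : (ι → ℤ) → Kˣ} {𝔭 : Ideal (MvPolynomial ι K)}

theorem prod_X_pow_sub_smul_mem_twistedToricIdeal {u v : ι → ℕ}
    (h : ∑ j, ((u j : ℤ) - (v j : ℤ)) • a j = 0) :
    (∏ j, X j ^ u j) - ((ρ (fun j => (u j : ℤ) - (v j : ℤ)) : K)) • ∏ j, X j ^ v j ∈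
      twistedToricIdeal a ρ :=
  Ideal.subset_span ⟨u, v, h, rfl⟩

theorem eq_zero_of_sum_zsmul_eq_zero (hprime : 𝔭.IsPrime) (hsub : twistedToricIdeal a ρ ≤ 𝔭)
    {z : ι → ℤ} (hz : ∑ j, z j • a j = 0) (hnonneg : ∀ j, X j ∈ 𝔭 → 0 ≤ z j) {j : ι}
    (hj : X j ∈ 𝔭) : z j = 0 := by
  set u : ι → ℕ := fun j => (z j).toNat
  set v : ι → ℕ := fun j => (-z j).toNat
  have hbin := hsub (prod_X_pow_sub_smul_mem_twistedToricIdeal (ρ := ρ) (u := u) (v := v) (by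
    rw [← hz]
    exact Finset.sum_congr rfl fun l _ => by rw [Int.toNat_sub_toNat_neg]))
  have hv : ∏ j, X j ^ v j ∉ 𝔭 := hprime.prod_pow_notMem fun l hl hXl => by
    have := hnonneg l hXl
    simp only [v] at hl
    omega
  by_contra hzj
  have huj : 0 < u j := by
    have := hnonneg j hj
    simp only [u]
    omega
  have hu : ∏ j, X j ^ u j ∈ 𝔭 :=
    hprime.prod_mem_iff.2 ⟨j, Finset.mem_univ j, Ideal.pow_mem_of_mem _ hj _ huj⟩
  have hsmul := 𝔭.sub_mem hu hbin
  rw [sub_sub_cancel] at hsmul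
  exact hv ((𝔭.smul_mem_iff' (ρ _)).1 (by rwa [Units.smul_def]))

theorem eq_zero_of_sum_real_smul_eq_zero {m : Type*} [Fintype m] {a : ι → m → ℤ} (hprime : 𝔭.IsPrime)
    (hsub : twistedToricIdeal a ρ ≤ 𝔭) {x : ι → ℝ}
    (hx : ∑ j, x j • (fun i => (a j i : ℝ)) = 0) (hnonneg : ∀ j, X j ∈ 𝔭 → 0 ≤ x j) {j : ι}
    (hj : X j ∈ 𝔭) : x j = 0 := by
  obtain ⟨z, hz, hsign⟩ := exists_int_sum_smul_eq_zero_sign_eq a hx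
  have hzj := eq_zero_of_sum_zsmul_eq_zero hprime hsub hz
    (fun l hl => sign_nonneg_iff.1 (hsign l ▸ sign_nonneg_iff.2 (hnonneg l hl))) hj
  simpa [hzj] using (hsign j).symm

theorem sum_monomial_sub_smul_mem_twistedToricIdeal {s : Finset (ι →₀ ℕ)} {c : (ι →₀ ℕ) → K}
    {b : Λ} (hs : ∀ e ∈ s, ∑ j, (e j : ℤ) • a j = b) {e₀ : ι →₀ ℕ}
    (he₀ : ∑ j, (e₀ j : ℤ) • a j = b) :
    ∑ e ∈ s, monomial e (c e) -
        (∑ e ∈ s, c e * ρ (fun j => (e j : ℤ) - e₀ j)) • ∏ j, X j ^ e₀ j ∈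
      twistedToricIdeal a ρ := by
  have hsum : ∑ e ∈ s, monomial e (c e) -
        (∑ e ∈ s, c e * ρ (fun j => (e j : ℤ) - e₀ j)) • ∏ j, X j ^ e₀ j =
      ∑ e ∈ s, c e • ((∏ j, X j ^ e j) -
        ((ρ (fun j => (e j : ℤ) - e₀ j) : K)) • ∏ j, X j ^ e₀ j) := by
    simp only [smul_sub, Finset.sum_sub_distrib, Finset.sum_smul, prod_X_pow_eq_monomial_one,
      smul_monomial, smul_eq_mul, mul_one]
  rw [hsum]
  refine Ideal.sum_mem _ fun e he => Submodule.smul_of_tower_mem _ _ ?_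
  exact prod_X_pow_sub_smul_mem_twistedToricIdeal (by
    simp only [sub_smul, Finset.sum_sub_distrib, hs e he, he₀, sub_self])

end TwistedToric

section TwistedToricField

variable {K ι Λ : Type*} [Field K] [Fintype ι] [AddCommGroup Λ]
  {a : ι → Λ} {ρ : (ι → ℤ) → Kˣ} {𝔭 : Ideal (MvPolynomial ι K)}

theorem sum_monomial_mem_twistedToricIdeal (hprime : 𝔭.IsPrime)
    (hsub : twistedToricIdeal a ρ ≤ 𝔭) {s : Finset (ι →₀ ℕ)} {c : (ι →₀ ℕ) → K} {b : Λ}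
    (hs : ∀ e ∈ s, ∑ j, (e j : ℤ) • a j = b) (hvars : ∀ e ∈ s, ∀ j, e j ≠ 0 → X j ∉ 𝔭)
    (hmem : ∑ e ∈ s, monomial e (c e) ∈ 𝔭) :
    ∑ e ∈ s, monomial e (c e) ∈ twistedToricIdeal a ρ := by
  obtain rfl | ⟨e₀, he₀⟩ := s.eq_empty_or_nonempty
  · simp
  have hI := sum_monomial_sub_smul_mem_twistedToricIdeal (ρ := ρ) (c := c) hs (hs e₀ he₀)
  obtain hc | hc := eq_or_ne (∑ e ∈ s, c e * ρ (fun j => (e j : ℤ) - e₀ j)) 0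
  · simpa [hc] using hI
  refine absurd ((𝔭.smul_mem_iff' (Units.mk0 _ hc)).1 ?_) (hprime.prod_pow_notMem (hvars e₀ he₀))
  simpa using 𝔭.sub_mem hmem (hsub hI)

theorem mem_twistedToricIdeal_sup_span_X (hprime : 𝔭.IsPrime)
    (hsub : twistedToricIdeal a ρ ≤ 𝔭) {g : MvPolynomial ι K} (hg : g ∈ 𝔭) {b : Λ}
    (hdeg : ∀ e ∈ g.support, ∑ j, (e j : ℤ) • a j = b) :
    g ∈ twistedToricIdeal a ρ ⊔ Ideal.span (X '' {j | X j ∈ 𝔭}) := by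
  classical
  set P : (ι →₀ ℕ) → Prop := fun e => ∀ j, e j ≠ 0 → X j ∉ 𝔭
  have hbad : ∑ e ∈ g.support with ¬P e, monomial e (coeff e g) ∈
      Ideal.span (X '' {j | X j ∈ 𝔭}) := by
    refine Ideal.sum_mem _ fun e he => mem_ideal_span_X_image.2 fun m hm => ?_
    obtain ⟨j, hj, hXj⟩ : ∃ j, e j ≠ 0 ∧ X j ∈ 𝔭 := by simpa [P] using (Finset.mem_filter.1 he).2
    exact ⟨j, hXj, by rwa [Finset.mem_singleton.1 (support_monomial_subset hm)]⟩
  rw [g.as_sum, ← Finset.sum_filter_add_sum_filter_not _ P] at hg ⊢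
  refine Submodule.add_mem_sup (sum_monomial_mem_twistedToricIdeal hprime hsub
    (fun e he => hdeg e (Finset.mem_filter.1 he).1) (fun e he => (Finset.mem_filter.1 he).2)
    ?_) hbad
  simpa using 𝔭.sub_mem hg (Ideal.span_le.2 (Set.image_subset_iff.2 fun _ h => h) hbad)

theorem eq_twistedToricIdeal_add_span_X (hprime : 𝔭.IsPrime) (hsub : twistedToricIdeal a ρ ≤ 𝔭)
    (hhom : ∃ G : Set (MvPolynomial ι K), 𝔭 = Ideal.span G ∧
      ∀ g ∈ G, ∃ b : Λ, ∀ e ∈ g.support, (∑ j, (e j : ℤ) • a j) = b) :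
    𝔭 = twistedToricIdeal a ρ + Ideal.span (X '' {j | X j ∈ 𝔭}) := by
  obtain ⟨G, hG, hGdeg⟩ := hhom
  refine le_antisymm ?_ (sup_le hsub (Ideal.span_le.2 (Set.image_subset_iff.2 fun _ h => h)))
  conv_lhs => rw [hG]
  refine Ideal.span_le.2 fun g hg => ?_
  obtain ⟨b, hb⟩ := hGdeg g hg
  exact mem_twistedToricIdeal_sup_span_X hprime hsub (hG ▸ Ideal.subset_span hg) hb

end TwistedToricField

theorem stmt_11_general {d n : ℕ} (a : Fin n → (Fin d → ℤ))
    (ρ : (Fin n → ℤ) → ℂˣ)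
    (I : Ideal (MvPolynomial (Fin n) ℂ))
    (hI : I = Ideal.span { f : MvPolynomial (Fin n) ℂ | ∃ u v : Fin n → ℕ,
      (∑ j, ((u j : ℤ) - (v j : ℤ)) • a j) = 0 ∧
      f = (∏ j, MvPolynomial.X j ^ u j) -
        ((ρ (fun j => (u j : ℤ) - (v j : ℤ)) : ℂ)) • ∏ j, MvPolynomial.X j ^ v j })
    (𝔭 : Ideal (MvPolynomial (Fin n) ℂ)) (hprime : 𝔭.IsPrime)
    (hsub : I ≤ 𝔭)
    (hhom : ∃ G : Set (MvPolynomial (Fin n) ℂ), 𝔭 = Ideal.span G ∧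
      ∀ g ∈ G, ∃ b : Fin d → ℤ, ∀ e ∈ g.support, (∑ j, (e j : ℤ) • a j) = b) :
    ∃ (σ : Finset (Fin n)) (φ : (Fin d → ℝ) →ₗ[ℝ] ℝ),
      (∀ j ∈ σ, φ (fun i => (a j i : ℝ)) = 0) ∧
      (∀ j ∉ σ, 0 < φ (fun i => (a j i : ℝ))) ∧
      𝔭 = I + Ideal.span (MvPolynomial.X '' {j : Fin n | j ∉ σ}) := by
  classical
  subst hI
  set σ : Finset (Fin n) := {j | X j ∉ 𝔭}
  have hσ : ∀ j, j ∉ σ ↔ X j ∈ 𝔭 := by simp [σ]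
  obtain ⟨φ, hφσ, hφpos⟩ := exists_strongDual_eq_zero_and_pos (fun j i => (a j i : ℝ)) σ
    fun x hx hnonneg j hj => eq_zero_of_sum_real_smul_eq_zero (a := a) hprime hsub hx
      (fun l hl => hnonneg l ((hσ l).2 hl)) ((hσ j).1 hj)
  refine ⟨σ, φ, hφσ, hφpos, ?_⟩
  simp only [hσ]
  exact eq_twistedToricIdeal_add_span_X hprime hsub hhom

/-- Let `a₁, …, aₙ ∈ ℤ^d` span `ℤ^d` as a group and generate a
pointed cone `C` (`C ∩ −C = {0}`). Let `ρ` be a character on `ker A` and `I_{A,ρ}`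
the twisted toric ideal. If `𝔭` is a prime ideal containing `I_{A,ρ}` which is
homogeneous for the `ℤ^d`-grading `deg xⱼ = aⱼ`, then there are a subset
`σ ⊆ {1,…,n}` and a linear functional `φ : ℝ^d → ℝ` vanishing on `{aⱼ : j ∈ σ}` and
strictly positive on `{aⱼ : j ∉ σ}` such that `𝔭 = I_{A,ρ} + ⟨xⱼ : j ∉ σ⟩`. -/
theorem stmt_11 {d n : ℕ} (a : Fin n → (Fin d → ℤ))
    (hspan : AddSubgroup.closure (Set.range a) = ⊤)
    (hpointed : ∀ c c' : Fin n → ℝ, (∀ j, 0 ≤ c j) → (∀ j, 0 ≤ c' j) →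
      (∑ j, c j • (fun i => (a j i : ℝ))) + (∑ j, c' j • (fun i => (a j i : ℝ))) = 0 →
      (∑ j, c j • (fun i => (a j i : ℝ))) = 0)
    (ρ : (Fin n → ℤ) → ℂˣ)
    (hρ0 : ρ 0 = 1)
    (hρ : ∀ w w' : Fin n → ℤ, (∑ j, w j • a j) = 0 → (∑ j, w' j • a j) = 0 →
      ρ (w + w') = ρ w * ρ w')
    (I : Ideal (MvPolynomial (Fin n) ℂ))
    (hI : I = Ideal.span { f : MvPolynomial (Fin n) ℂ | ∃ u v : Fin n → ℕ,
      (∑ j, ((u j : ℤ) - (v j : ℤ)) • a j) = 0 ∧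
      f = (∏ j, MvPolynomial.X j ^ u j) -
        ((ρ (fun j => (u j : ℤ) - (v j : ℤ)) : ℂ)) • ∏ j, MvPolynomial.X j ^ v j })
    (𝔭 : Ideal (MvPolynomial (Fin n) ℂ)) (hprime : 𝔭.IsPrime)
    (hsub : I ≤ 𝔭)
    (hhom : ∃ G : Set (MvPolynomial (Fin n) ℂ), 𝔭 = Ideal.span G ∧
      ∀ g ∈ G, ∃ b : Fin d → ℤ, ∀ e ∈ g.support, (∑ j, (e j : ℤ) • a j) = b) :
    ∃ (σ : Finset (Fin n)) (φ : (Fin d → ℝ) →ₗ[ℝ] ℝ),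
      (∀ j ∈ σ, φ (fun i => (a j i : ℝ)) = 0) ∧
      (∀ j ∉ σ, 0 < φ (fun i => (a j i : ℝ))) ∧
      𝔭 = I + Ideal.span (MvPolynomial.X '' {j : Fin n | j ∉ σ}) :=
  stmt_11_general a ρ I hI 𝔭 hprime hsub hhom
end

section
/- Let A be an integer d×n matrix with columns a_1, …, a_n ∈ ℤ^d and let ρ : ker A → ℂˣ be a group homomorphism, with I_{A,ρ} ⊆ ℂ[x_1,…,x_n] the ideal generated by the binomials x^u − ρ(u−v)·x^v over all u, v ∈ ℕ^n with u − v ∈ ker A. Assume the cone C = ℝ_{≥0}a_1 + ⋯ + ℝ_{≥0}a_n satisfies C ∩ (−C) = {0}. Let σ ⊆ {1,…,n} be a subset for which there exists a linear functional φ : ℝ^d → ℝ with φ(a_j) = 0 for all j ∈ σ and φ(a_j) > 0 for all j ∉ σ. Then the ideal I^σ_{A,ρ} := I_{A,ρ} + ⟨x_j : j ∉ σ⟩ is a prime ideal of ℂ[x_1,…,x_n]. -/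
/-!
Extend `ρ` to a character `χ` of `ℤⁿ` (possible since `ℂˣ` is divisible, hence an injective
`ℤ`-module) and consider the `ℂ`-algebra map `ψ : ℂ[x] → ℂ[ℤᵈ]` sending `xⱼ` to `χ(eⱼ) t^{aⱼ}`
for `j ∈ σ` and to `0` otherwise. Its target is a domain, so it suffices to show that its kernel
is `I^σ_{A,ρ}`. The functional `φ` shows that a monomial of the same `A`-degree as a monomial
supported on `σ` is itself supported on `σ`, so `ψ` kills the binomial generators. Conversely,
modulo `I_{A,ρ}` the normalized monomials `χ(u)⁻¹ xᵘ` depend only on `A u`, which gives a linear map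
`L : ℂ[ℤᵈ] → ℂ[x]/I^σ_{A,ρ}` with `L ∘ ψ` the quotient map.
-/

open MvPolynomial

theorem IsAlgClosed.pow_surjective_units {K : Type*} [Field K] [IsAlgClosed K] {k : ℕ}
    (hk : k ≠ 0) : Function.Surjective fun x : Kˣ => x ^ k := fun y => by
  obtain ⟨z, hz⟩ := IsAlgClosed.exists_pow_nat_eq (y : K) (Nat.pos_of_ne_zero hk)
  have hz0 : z ≠ 0 := by rintro rfl; exact y.ne_zero (by rw [← hz, zero_pow hk])
  exact ⟨Units.mk0 z hz0, Units.ext (by simpa using hz)⟩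

theorem IsAlgClosed.exists_addChar_eq_on {K M : Type*} [Field K] [IsAlgClosed K]
    [AddCommGroup M] (H : AddSubgroup M) (ρ : M → Kˣ)
    (hρ : ∀ w ∈ H, ∀ w' ∈ H, ρ (w + w') = ρ w * ρ w') :
    ∃ χ : AddChar M Kˣ, ∀ w ∈ H, χ w = ρ w := by
  let : RootableBy Kˣ ℤ :=
    let := rootableByOfPowLeftSurj Kˣ ℕ fun hk => pow_surjective_units hk
    Group.rootableByIntOfRootableByNat Kˣ
  let : DivisibleBy (Additive Kˣ) ℤ := divisibleByOfSMulRightSurj (Additive Kˣ) ℤ fun hn x =>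
    ⟨.ofMul (RootableBy.root x.toMul _), congrArg Additive.ofMul (RootableBy.root_cancel _ hn)⟩
  let ρH : H →+ Additive Kˣ :=
    AddMonoidHom.mk' (fun w => .ofMul (ρ w)) fun w w' => congrArg _ (hρ w w.2 w' w'.2)
  obtain ⟨χ, hχ⟩ := (Module.Baer.of_divisible (Additive Kˣ)).extension_property_addMonoidHom
    H.subtype Subtype.coe_injective ρH
  exact ⟨AddChar.toAddMonoidHomEquiv.symm χ, fun w hw => congrArg Additive.toMul
    (DFunLike.congr_fun hχ ⟨w, hw⟩)⟩

variable {G ι : Type*} [AddCommGroup G] [Fintype ι]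

theorem AddChar.apply_eq_prod_pow_single [DecidableEq ι] {M : Type*} [CommMonoid M]
    (χ : AddChar (ι → ℕ) M) (u : ι → ℕ) : χ u = ∏ j, χ (Pi.single j 1) ^ u j := by
  have hu : u = ∑ j, u j • Pi.single j 1 := by
    ext i
    simp [Pi.single_apply]
  conv_lhs => rw [hu]
  simp only [← χ.map_nsmul_eq_pow]
  exact map_prod χ.toMonoidHom _ _

def IsFace (a : ι → G) (σ : Finset ι) : Prop :=
  ∀ u v : ι → ℕ, ∑ j, u j • a j = ∑ j, v j • a j → (∀ j ∉ σ, v j = 0) → ∀ j ∉ σ, u j = 0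

theorem isFace_of_addMonoidHom {R : Type*} [AddCommGroup R] [LinearOrder R]
    [IsOrderedAddMonoid R] (a : ι → G) (σ : Finset ι) (ℓ : G →+ R)
    (h0 : ∀ j ∈ σ, ℓ (a j) = 0) (hpos : ∀ j ∉ σ, 0 < ℓ (a j)) : IsFace a σ := by
  intro u v huv hv j hj
  have hℓv : ∑ i, u i • ℓ (a i) = 0 := by
    have := congrArg ℓ huv
    simp only [map_sum, map_nsmul] at this
    rw [this]
    refine Finset.sum_eq_zero fun i _ => ?_
    by_cases hi : i ∈ σ
    · rw [h0 i hi, smul_zero]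
    · rw [hv i hi, zero_smul]
  have hnonneg : ∀ i ∈ Finset.univ, 0 ≤ u i • ℓ (a i) := fun i _ => by
    by_cases hi : i ∈ σ
    · rw [h0 i hi, smul_zero]
    · exact nsmul_nonneg (hpos i hi).le _
  have := (Finset.sum_eq_zero_iff_of_nonneg hnonneg).mp hℓv j (Finset.mem_univ j)
  by_contra hu
  exact (nsmul_pos (hpos j hj) hu).ne' this

theorem sum_sub_zsmul_eq_zero_iff (a : ι → G) (u v : ι → ℕ) :
    ∑ j, ((u j : ℤ) - (v j : ℤ)) • a j = 0 ↔ ∑ j, u j • a j = ∑ j, v j • a j := by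
  simp only [sub_smul, natCast_zsmul, Finset.sum_sub_distrib, sub_eq_zero]

theorem exists_addChar_of_map_add {K : Type*} [Field K] [IsAlgClosed K] (a : ι → G)
    (ρ : (ι → ℤ) → Kˣ)
    (hρ : ∀ w w' : ι → ℤ, ∑ j, w j • a j = 0 → ∑ j, w' j • a j = 0 → ρ (w + w') = ρ w * ρ w') :
    ∃ χ : AddChar (ι → ℕ) Kˣ, ∀ u v : ι → ℕ, ∑ j, u j • a j = ∑ j, v j • a j →
      χ u = ρ (fun j => (u j : ℤ) - v j) * χ v := by
  obtain ⟨χ, hχ⟩ := IsAlgClosed.exists_addChar_eq_on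
    (Fintype.linearCombination ℤ a).ker.toAddSubgroup ρ fun w hw w' hw' => hρ w w' hw hw'
  refine ⟨χ.compAddMonoidHom (AddMonoidHom.compLeft (Nat.castAddMonoidHom ℤ) ι), fun u v huv => ?_⟩
  rw [← hχ _ ((sum_sub_zsmul_eq_zero_iff a u v).mpr huv), AddChar.compAddMonoidHom_apply,
    AddChar.compAddMonoidHom_apply, ← χ.map_add_eq_mul]
  congr 1
  ext j
  simp

section Toric

variable {K : Type*} [CommRing K]

noncomputable def toricIdeal (a : ι → G) (ρ : (ι → ℤ) → Kˣ) : Ideal (MvPolynomial ι K) :=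
  Ideal.span {f | ∃ u v : ι → ℕ, (∑ j, ((u j : ℤ) - (v j : ℤ)) • a j) = 0 ∧
    f = (∏ j, X j ^ u j) - ((ρ (fun j => (u j : ℤ) - (v j : ℤ)) : K)) • ∏ j, X j ^ v j}

noncomputable def toricFaceIdeal (a : ι → G) (ρ : (ι → ℤ) → Kˣ) (σ : Finset ι) :
    Ideal (MvPolynomial ι K) :=
  toricIdeal a ρ + Ideal.span (X '' {j | j ∉ σ})

theorem prod_X_pow_mem_toricFaceIdeal (a : ι → G) (ρ : (ι → ℤ) → Kˣ) {σ : Finset ι}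
    {u : ι → ℕ} (hu : ¬∀ j ∉ σ, u j = 0) : ∏ j, X j ^ u j ∈ toricFaceIdeal a ρ σ := by
  push Not at hu
  obtain ⟨j, hj, huj⟩ := hu
  refine Ideal.mem_sup_right (Ideal.mem_of_dvd _ ?_ (Ideal.subset_span ⟨j, hj, rfl⟩))
  exact (dvd_pow_self _ huj).trans (Finset.dvd_prod_of_mem _ (Finset.mem_univ j))

variable [DecidableEq ι]

noncomputable def faceMap (a : ι → G) (σ : Finset ι) (χ : AddChar (ι → ℕ) Kˣ) :
    MvPolynomial ι K →ₐ[K] AddMonoidAlgebra K G :=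
  aeval fun j => if j ∈ σ then AddMonoidAlgebra.single (a j) (χ (Pi.single j 1) : K) else 0

section FaceMap

variable (a : ι → G) (σ : Finset ι) (χ : AddChar (ι → ℕ) Kˣ)

omit [Fintype ι] in
theorem faceMap_X (j : ι) : faceMap a σ χ (X j) =
    if j ∈ σ then AddMonoidAlgebra.single (a j) (χ (Pi.single j 1) : K) else 0 :=
  aeval_X _ _

theorem faceMap_prod_X_pow (u : ι → ℕ) : faceMap a σ χ (∏ j, X j ^ u j) =
    if ∀ j ∉ σ, u j = 0 then AddMonoidAlgebra.single (∑ j, u j • a j) (χ u : K) else 0 := by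
  rw [map_prod]
  split_ifs with hu
  · have hfactor : ∀ j, faceMap a σ χ (X j ^ u j) =
        AddMonoidAlgebra.single (u j • a j) ((χ (Pi.single j 1) : K) ^ u j) := fun j => by
      rw [map_pow, faceMap_X]
      split_ifs with hj
      · exact AddMonoidAlgebra.single_pow _ _ _
      · simp [hu j hj, AddMonoidAlgebra.one_def]
    simp_rw [hfactor, AddMonoidAlgebra.prod_single, χ.apply_eq_prod_pow_single u]
    push_cast
    rfl
  · push Not at hu
    obtain ⟨j, hj, huj⟩ := hu
    exact Finset.prod_eq_zero (Finset.mem_univ j)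
      (by rw [map_pow, faceMap_X, if_neg hj, zero_pow huj])

variable {a σ χ} {ρ : (ι → ℤ) → Kˣ}
  (hχ : ∀ u v : ι → ℕ, ∑ j, u j • a j = ∑ j, v j • a j →
    χ u = ρ (fun j => (u j : ℤ) - v j) * χ v)
include hχ

omit [DecidableEq ι] in
theorem inv_smul_prod_X_pow_sub_mem_toricIdeal {u v : ι → ℕ}
    (huv : ∑ j, u j • a j = ∑ j, v j • a j) :
    (χ u)⁻¹ • ∏ j, X j ^ u j - (χ v)⁻¹ • ∏ j, X (R := K) j ^ v j ∈ toricIdeal a ρ := by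
  have hbinomial : _ ∈ toricIdeal (K := K) a ρ :=
    Ideal.subset_span ⟨u, v, (sum_sub_zsmul_eq_zero_iff a u v).mpr huv, rfl⟩
  convert Submodule.smul_of_tower_mem _ (χ u)⁻¹ hbinomial using 1
  rw [smul_sub, ← Units.smul_def, smul_smul, hχ u v huv, mul_inv_rev, inv_mul_cancel_right]

theorem exists_linearMap_comp_faceMap_eq_mk :
    ∃ L : AddMonoidAlgebra K G →ₗ[K] MvPolynomial ι K ⧸ toricFaceIdeal a ρ σ,
      L ∘ₗ (faceMap a σ χ).toLinearMap = (Ideal.Quotient.mkₐ K _).toLinearMap := by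
  set g : (ι → ℕ) → MvPolynomial ι K ⧸ toricFaceIdeal a ρ σ :=
    fun u => Ideal.Quotient.mkₐ K _ ((χ u)⁻¹ • ∏ j, X j ^ u j)
  have hg : Function.FactorsThrough g fun u => ∑ j, u j • a j := fun u v huv =>
    Ideal.Quotient.eq.mpr (Ideal.mem_sup_left (inv_smul_prod_X_pow_sub_mem_toricIdeal hχ huv))
  refine ⟨Finsupp.linearCombination K (Function.extend (fun u => ∑ j, u j • a j) g 0) ∘ₗ
    (AddMonoidAlgebra.coeffLinearEquiv K).toLinearMap, ?_⟩
  refine MvPolynomial.linearMap_ext fun s => LinearMap.ext_ring ?_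
  have hmon : (monomial s (1 : K)) = ∏ j, X j ^ s j := by
    rw [monomial_eq, C_1, one_mul, Finsupp.prod_fintype _ _ fun j => pow_zero _]
  simp only [LinearMap.coe_comp, Function.comp_apply, AlgHom.toLinearMap_apply, hmon,
    faceMap_prod_X_pow]
  split_ifs with hs
  · rw [LinearEquiv.coe_coe, AddMonoidAlgebra.coeffLinearEquiv_apply,
      AddMonoidAlgebra.coeff_single, Finsupp.linearCombination_single, hg.extend_apply,
      ← map_smul, ← Units.smul_def, smul_inv_smul]
  · rw [map_zero, map_zero, eq_comm, Ideal.Quotient.mkₐ_eq_mk, Ideal.Quotient.eq_zero_iff_mem]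
    exact prod_X_pow_mem_toricFaceIdeal a ρ hs

theorem ker_faceMap_le_toricFaceIdeal : RingHom.ker (faceMap a σ χ) ≤ toricFaceIdeal a ρ σ := by
  obtain ⟨L, hL⟩ := exists_linearMap_comp_faceMap_eq_mk hχ
  intro f hf
  rw [← Ideal.Quotient.eq_zero_iff_mem, ← Ideal.Quotient.mkₐ_eq_mk K, ← AlgHom.toLinearMap_apply,
    ← hL, LinearMap.comp_apply, AlgHom.toLinearMap_apply, RingHom.mem_ker.mp hf, map_zero]

theorem toricFaceIdeal_le_ker_faceMap (hface : IsFace a σ) :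
    toricFaceIdeal a ρ σ ≤ RingHom.ker (faceMap a σ χ) := by
  refine sup_le (Ideal.span_le.mpr ?_) (Ideal.span_le.mpr ?_)
  · rintro _ ⟨u, v, huv, rfl⟩
    rw [sum_sub_zsmul_eq_zero_iff] at huv
    have hsupp : (∀ j ∉ σ, u j = 0) ↔ ∀ j ∉ σ, v j = 0 := ⟨hface v u huv.symm, hface u v huv⟩
    simp only [SetLike.mem_coe, RingHom.mem_ker, map_sub, map_smul, faceMap_prod_X_pow, hsupp]
    split_ifs
    · rw [huv, hχ u v huv, AddMonoidAlgebra.smul_single', Units.val_mul, sub_self]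
    · rw [smul_zero, sub_zero]
  · rintro _ ⟨j, hj, rfl⟩
    exact (faceMap_X a σ χ j).trans (if_neg hj)

theorem ker_faceMap (hface : IsFace a σ) : RingHom.ker (faceMap a σ χ) = toricFaceIdeal a ρ σ :=
  le_antisymm (ker_faceMap_le_toricFaceIdeal hχ) (toricFaceIdeal_le_ker_faceMap hχ hface)

end FaceMap

end Toric

theorem stmt_12_general {d n : ℕ} (a : Fin n → (Fin d → ℤ))
    (ρ : (Fin n → ℤ) → ℂˣ)
    (hρ : ∀ w w' : Fin n → ℤ, (∑ j, w j • a j) = 0 → (∑ j, w' j • a j) = 0 →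
      ρ (w + w') = ρ w * ρ w')
    (I : Ideal (MvPolynomial (Fin n) ℂ))
    (hI : I = Ideal.span { f : MvPolynomial (Fin n) ℂ | ∃ u v : Fin n → ℕ,
      (∑ j, ((u j : ℤ) - (v j : ℤ)) • a j) = 0 ∧
      f = (∏ j, MvPolynomial.X j ^ u j) -
        ((ρ (fun j => (u j : ℤ) - (v j : ℤ)) : ℂ)) • ∏ j, MvPolynomial.X j ^ v j })
    (σ : Finset (Fin n)) (φ : (Fin d → ℝ) →ₗ[ℝ] ℝ)
    (hφ0 : ∀ j ∈ σ, φ (fun i => (a j i : ℝ)) = 0)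
    (hφpos : ∀ j ∉ σ, 0 < φ (fun i => (a j i : ℝ))) :
    (I + Ideal.span (MvPolynomial.X '' {j : Fin n | j ∉ σ})).IsPrime := by
  subst hI
  obtain ⟨χ, hχ⟩ := exists_addChar_of_map_add a ρ hρ
  have hface : IsFace a σ := isFace_of_addMonoidHom a σ
    ((φ : (Fin d → ℝ) →+ ℝ).comp (AddMonoidHom.compLeft (Int.castAddHom ℝ) (Fin d))) hφ0 hφpos
  have hprime := RingHom.ker_isPrime (faceMap a σ χ)
  rwa [ker_faceMap hχ hface] at hprime

/-- With `a₁, …, aₙ ∈ ℤ^d` generating a pointed cone, `ρ` a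
character on `ker A`, and `σ ⊆ {1,…,n}` a face (cut out by a linear functional
vanishing on `σ` and strictly positive off `σ`), the ideal
`I^σ_{A,ρ} = I_{A,ρ} + ⟨xⱼ : j ∉ σ⟩` is prime. -/
theorem stmt_12 {d n : ℕ} (a : Fin n → (Fin d → ℤ))
    (hpointed : ∀ c c' : Fin n → ℝ, (∀ j, 0 ≤ c j) → (∀ j, 0 ≤ c' j) →
      (∑ j, c j • (fun i => (a j i : ℝ))) + (∑ j, c' j • (fun i => (a j i : ℝ))) = 0 →
      (∑ j, c j • (fun i => (a j i : ℝ))) = 0)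
    (ρ : (Fin n → ℤ) → ℂˣ)
    (hρ0 : ρ 0 = 1)
    (hρ : ∀ w w' : Fin n → ℤ, (∑ j, w j • a j) = 0 → (∑ j, w' j • a j) = 0 →
      ρ (w + w') = ρ w * ρ w')
    (I : Ideal (MvPolynomial (Fin n) ℂ))
    (hI : I = Ideal.span { f : MvPolynomial (Fin n) ℂ | ∃ u v : Fin n → ℕ,
      (∑ j, ((u j : ℤ) - (v j : ℤ)) • a j) = 0 ∧
      f = (∏ j, MvPolynomial.X j ^ u j) -
        ((ρ (fun j => (u j : ℤ) - (v j : ℤ)) : ℂ)) • ∏ j, MvPolynomial.X j ^ v j })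
    (σ : Finset (Fin n)) (φ : (Fin d → ℝ) →ₗ[ℝ] ℝ)
    (hφ0 : ∀ j ∈ σ, φ (fun i => (a j i : ℝ)) = 0)
    (hφpos : ∀ j ∉ σ, 0 < φ (fun i => (a j i : ℝ))) :
    (I + Ideal.span (MvPolynomial.X '' {j : Fin n | j ∉ σ})).IsPrime :=
  stmt_12_general a ρ hρ I hI σ φ hφ0 hφpos
end

section
/- Let A be an integer d×n matrix with columns a_1, …, a_n ∈ ℤ^d, ρ : ker A → ℂˣ a group homomorphism, and σ ⊆ {1,…,n} a subset for which there exists a linear functional φ : ℝ^d → ℝ with φ(a_j) = 0 for all j ∈ σ and φ(a_j) > 0 for all j ∉ σ. Let B = (a_j)_{j ∈ σ}, let ker B = {w ∈ ker A : w_j = 0 for all j ∉ σ}, and let ρ' be the restriction of ρ to ker B. Then the ℂ-algebra map ℂ[x_1,…,x_n] → ℂ[x_j : j ∈ σ] sending x_j ↦ x_j for j ∈ σ and x_j ↦ 0 for j ∉ σ induces a ℂ-algebra isomorphism ℂ[x_1,…,x_n]/(I_{A,ρ} + ⟨x_j : j ∉ σ⟩) ≅ ℂ[x_j : j ∈ σ]/I_{B,ρ'}.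 -/
/-!
The map `ψ` is `MvPolynomial.killCompl` for the inclusion `σ ↪ Fin n`: it is surjective with
kernel `⟨x_j : j ∉ σ⟩`, so the left-hand quotient is `ℂ[σ] ⧸ ψ(I_{A,ρ})`, and it remains to show
`ψ(I_{A,ρ}) = I_{B,ρ'}`. The map `ψ` kills a generator `x^u - ρ(u - v) x^v` of `I_{A,ρ}` unless
`u` or `v` is supported on `σ`; applying the face functional to `∑ (u_j - v_j) a_j = 0` shows
that then both are, and the image is a generator of `I_{B,ρ'}`. Conversely every generator of
`I_{B,ρ'}` comes back from `I_{A,ρ}` along `rename Subtype.val`, a section of `ψ`.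
-/

open MvPolynomial

@[to_additive]
theorem Finset.prod_eq_prod_subtype_of_eq_one {ι M : Type*} [Fintype ι] [CommMonoid M]
    {s : Finset ι} {f : ι → M} (hf : ∀ j ∉ s, f j = 1) : ∏ j, f j = ∏ j : s, f j := by
  rw [Finset.prod_coe_sort s f, Finset.prod_subset s.subset_univ fun j _ hj => hf j hj]

noncomputable def Ideal.quotientSupKerAlgEquivOfSurjective {R A B : Type*} [CommSemiring R]
    [CommRing A] [CommRing B] [Algebra R A] [Algebra R B] {ψ : A →ₐ[R] B}
    (hψ : Function.Surjective ψ) (I : Ideal A) :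
    (A ⧸ I ⊔ RingHom.ker ψ) ≃ₐ[R] B ⧸ I.map ψ :=
  have hker : I ⊔ RingHom.ker ψ = RingHom.ker ((Ideal.Quotient.mkₐ R (I.map ψ)).comp ψ) := by
    rw [← AlgHom.comap_ker, ← RingHom.ker_coe_toRingHom (Ideal.Quotient.mkₐ R _),
      Ideal.Quotient.mkₐ_ker, Ideal.comap_map_of_surjective ψ hψ, RingHom.ker_eq_comap_bot]
  (Ideal.quotientEquivAlgOfEq R hker).trans
    (Ideal.quotientKerAlgEquivOfSurjective ((Ideal.Quotient.mkₐ_surjective R _).comp hψ))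

theorem Ideal.quotientSupKerAlgEquivOfSurjective_mk {R A B : Type*} [CommSemiring R]
    [CommRing A] [CommRing B] [Algebra R A] [Algebra R B] {ψ : A →ₐ[R] B}
    (hψ : Function.Surjective ψ) (I : Ideal A) (f : A) :
    Ideal.quotientSupKerAlgEquivOfSurjective hψ I (Ideal.Quotient.mk _ f) =
      Ideal.Quotient.mk _ (ψ f) := rfl

namespace MvPolynomial

variable {σ τ R : Type*} [CommRing R] {f : σ → τ} (hf : Function.Injective f)

@[simp]
theorem killCompl_X_apply (i : σ) : killCompl (R := R) hf (X (f i)) = X i := by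
  rw [← rename_X f i, killCompl_rename_app]

theorem killCompl_X_of_notMem_range {i : τ} (hi : i ∉ Set.range f) :
    killCompl (R := R) hf (X i) = 0 := by
  rw [killCompl, aeval_X, dif_neg hi]

theorem killCompl_surjective : Function.Surjective (killCompl (R := R) hf) :=
  fun p => ⟨rename f p, killCompl_rename_app hf p⟩

theorem sub_rename_killCompl_mem_span_X (p : MvPolynomial τ R) :
    p - rename f (killCompl hf p) ∈ Ideal.span (X '' (Set.range f)ᶜ) := by
  induction p using MvPolynomial.induction_on with
  | C c => simp
  | add p q hp hq => simpa [add_sub_add_comm] using add_mem hp hq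
  | mul_X p i hp =>
    have hXi : (X i : MvPolynomial τ R) - rename f (killCompl hf (X i)) ∈
        Ideal.span (X '' (Set.range f)ᶜ) := by
      by_cases hi : i ∈ Set.range f
      · obtain ⟨k, rfl⟩ := hi
        simp
      · simpa [killCompl_X_of_notMem_range hf hi] using
          Ideal.subset_span (Set.mem_image_of_mem X hi)
    have hsplit : p * X i - rename f (killCompl hf (p * X i)) =
        (p - rename f (killCompl hf p)) * X i +
          rename f (killCompl hf p) * (X i - rename f (killCompl hf (X i))) := by
      simp only [map_mul]; ring
    rw [hsplit]
    exact add_mem (Ideal.mul_mem_right _ _ hp) (Ideal.mul_mem_left _ _ hXi)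

theorem ker_killCompl :
    RingHom.ker (killCompl (R := R) hf) = Ideal.span (X '' (Set.range f)ᶜ) := by
  apply le_antisymm
  · intro p hp
    simpa [(RingHom.mem_ker).mp hp] using sub_rename_killCompl_mem_span_X hf p
  · rw [Ideal.span_le]
    rintro _ ⟨i, hi, rfl⟩
    exact killCompl_X_of_notMem_range hf hi

theorem killCompl_subtype_val_eq_aeval {ι : Type*} [DecidableEq ι] (s : Finset ι) :
    killCompl (R := R) (Subtype.val_injective (p := (· ∈ s))) =
      aeval fun j => if h : j ∈ s then X ⟨j, h⟩ else 0 := by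
  refine algHom_ext fun j => ?_
  rw [aeval_X]
  split_ifs with h
  · exact killCompl_X_apply Subtype.val_injective (⟨j, h⟩ : {j // j ∈ s})
  · exact killCompl_X_of_notMem_range _ (by simpa using h)

end MvPolynomial

section Relations

variable {ι M : Type*} [Fintype ι] [AddCommGroup M]

def IsRelationClosed (a : ι → M) (s : Finset ι) : Prop :=
  ∀ u v : ι → ℕ, ∑ j, ((u j : ℤ) - v j) • a j = 0 → (∀ j ∉ s, u j = 0) → ∀ j ∉ s, v j = 0

theorem IsRelationClosed.forall_eq_zero_iff {a : ι → M} {s : Finset ι}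
    (hs : IsRelationClosed a s) {u v : ι → ℕ} (hsum : ∑ j, ((u j : ℤ) - v j) • a j = 0) :
    (∀ j ∉ s, u j = 0) ↔ ∀ j ∉ s, v j = 0 := by
  refine ⟨hs u v hsum, hs v u ?_⟩
  rw [← neg_eq_zero, ← Finset.sum_neg_distrib, ← hsum]
  simp [← neg_smul]

theorem isRelationClosed_of_face {N : Type*} [AddCommGroup N] [PartialOrder N]
    [IsOrderedAddMonoid N] {a : ι → M} {s : Finset ι} (φ : M →+ N)
    (hφ0 : ∀ j ∈ s, φ (a j) = 0) (hφpos : ∀ j ∉ s, 0 < φ (a j)) : IsRelationClosed a s := by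
  intro u v hsum hu
  have hterm : ∀ j, ((u j : ℤ) - v j) • φ (a j) = -(v j • φ (a j)) := fun j => by
    by_cases hj : j ∈ s
    · simp [hφ0 j hj]
    · simp [hu j hj]
  have hnonneg : ∀ j ∈ Finset.univ, 0 ≤ v j • φ (a j) := fun j _ => by
    by_cases hj : j ∈ s
    · simp [hφ0 j hj]
    · exact nsmul_nonneg (hφpos j hj).le _
  have hzero : ∑ j, v j • φ (a j) = 0 := by
    simpa [map_sum, map_zsmul, hterm] using congrArg φ hsum
  intro j hj
  by_contra hvj
  exact (nsmul_pos (hφpos j hj) hvj).ne'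
    ((Finset.sum_eq_zero_iff_of_nonneg hnonneg).mp hzero j (Finset.mem_univ j))

end Relations

section Binomial

variable {ι M R : Type*} [Fintype ι] [AddCommGroup M] [CommRing R]

-- `binomialIdeal a χ` is `I_{A,χ}` for the matrix `A` with columns `a j`; on a face `s` the
-- restricted character is `χ` precomposed with extension by zero.
noncomputable def binomialIdeal (a : ι → M) (χ : (ι → ℤ) → R) : Ideal (MvPolynomial ι R) :=
  Ideal.span {f | ∃ u v : ι → ℕ, ∑ j, ((u j : ℤ) - v j) • a j = 0 ∧
    f = (∏ j, X j ^ u j) - χ (fun j => (u j : ℤ) - v j) • ∏ j, X j ^ v j}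

variable {s : Finset ι}

local notation "κ" => killCompl (R := R) (Subtype.val_injective (p := (· ∈ s)))

theorem killCompl_prod_X_pow_of_forall {u : ι → ℕ} (hu : ∀ j ∉ s, u j = 0) :
    κ (∏ j, X j ^ u j) = ∏ j : s, X j ^ u j := by
  rw [Finset.prod_eq_prod_subtype_of_eq_one fun j hj => by rw [hu j hj, pow_zero], map_prod]
  simp

theorem killCompl_prod_X_pow_eq_zero {u : ι → ℕ} {j : ι} (hj : j ∉ s) (hu : u j ≠ 0) :
    κ (∏ j, X j ^ u j) = 0 := by
  rw [map_prod]
  refine Finset.prod_eq_zero (Finset.mem_univ j) ?_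
  rw [map_pow, killCompl_X_of_notMem_range _ (by simpa using hj), zero_pow hu]

variable [DecidableEq ι]

theorem rename_prod_X_pow_subtype (w : s → ℕ) :
    rename (↑) (∏ j : s, (X j : MvPolynomial s R) ^ w j) =
      ∏ j, X j ^ (if h : j ∈ s then w ⟨j, h⟩ else 0) := by
  rw [Finset.prod_eq_prod_subtype_of_eq_one (s := s) fun j hj => by rw [dif_neg hj, pow_zero],
    map_prod]
  simp

theorem map_rename_binomialIdeal_le (a : ι → M) (χ : (ι → ℤ) → R) :
    (binomialIdeal (fun j : s => a j)
        (fun w => χ fun j => if h : j ∈ s then w ⟨j, h⟩ else 0)).map (rename (↑)) ≤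
      binomialIdeal a χ := by
  rw [binomialIdeal, Ideal.map_span, Ideal.span_le]
  rintro _ ⟨_, ⟨u, v, hsum, rfl⟩, rfl⟩
  refine Ideal.subset_span ⟨fun j => if h : j ∈ s then u ⟨j, h⟩ else 0,
    fun j => if h : j ∈ s then v ⟨j, h⟩ else 0, ?_, ?_⟩
  · rw [Finset.sum_eq_sum_subtype_of_eq_zero (s := s) fun j hj => by simp [hj]]
    simpa using hsum
  · rw [map_sub, map_smul, rename_prod_X_pow_subtype, rename_prod_X_pow_subtype]
    congr 3
    funext j
    by_cases hj : j ∈ s <;> simp [hj]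

theorem map_killCompl_binomialIdeal_le (a : ι → M) (χ : (ι → ℤ) → R)
    (hs : IsRelationClosed a s) :
    (binomialIdeal a χ).map κ ≤ binomialIdeal (fun j : s => a j)
      (fun w => χ fun j => if h : j ∈ s then w ⟨j, h⟩ else 0) := by
  rw [binomialIdeal, Ideal.map_span, Ideal.span_le]
  rintro _ ⟨_, ⟨u, v, hsum, rfl⟩, rfl⟩
  by_cases hu : ∀ j ∉ s, u j = 0
  · have hv := (hs.forall_eq_zero_iff hsum).mp hu
    refine Ideal.subset_span ⟨fun j => u j, fun j => v j, ?_, ?_⟩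
    · refine (Finset.sum_eq_sum_subtype_of_eq_zero (s := s)
        (f := fun j => ((u j : ℤ) - v j) • a j) fun j hj => ?_).symm.trans hsum
      simp [hu j hj, hv j hj]
    · rw [map_sub, map_smul, killCompl_prod_X_pow_of_forall hu,
        killCompl_prod_X_pow_of_forall hv]
      congr 3
      funext j
      by_cases hj : j ∈ s <;> simp [hu j, hv j, hj]
  · have hv := mt (hs.forall_eq_zero_iff hsum).mpr hu
    push Not at hu hv
    obtain ⟨j, hj, huj⟩ := hu
    obtain ⟨k, hk, hvk⟩ := hv
    rw [map_sub, map_smul, killCompl_prod_X_pow_eq_zero hj huj,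
      killCompl_prod_X_pow_eq_zero hk hvk, smul_zero, sub_zero]
    exact Ideal.zero_mem _

theorem map_killCompl_binomialIdeal (a : ι → M) (χ : (ι → ℤ) → R)
    (hs : IsRelationClosed a s) :
    (binomialIdeal a χ).map κ = binomialIdeal (fun j : s => a j)
      (fun w => χ fun j => if h : j ∈ s then w ⟨j, h⟩ else 0) := by
  refine le_antisymm (map_killCompl_binomialIdeal_le a χ hs) ?_
  have h := Ideal.map_mono (f := κ) (map_rename_binomialIdeal_le (s := s) a χ)
  rwa [Ideal.map_mapₐ, killCompl_comp_rename, Ideal.map_idₐ] at h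

end Binomial

theorem stmt_13_general {d n : ℕ} (a : Fin n → (Fin d → ℤ))
    (ρ : (Fin n → ℤ) → ℂˣ)
    (σ : Finset (Fin n)) (φ : (Fin d → ℝ) →ₗ[ℝ] ℝ)
    (hφ0 : ∀ j ∈ σ, φ (fun i => (a j i : ℝ)) = 0)
    (hφpos : ∀ j ∉ σ, 0 < φ (fun i => (a j i : ℝ)))
    (I : Ideal (MvPolynomial (Fin n) ℂ))
    (hI : I = Ideal.span { f : MvPolynomial (Fin n) ℂ | ∃ u v : Fin n → ℕ,
      (∑ j, ((u j : ℤ) - (v j : ℤ)) • a j) = 0 ∧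
      f = (∏ j, MvPolynomial.X j ^ u j) -
        ((ρ (fun j => (u j : ℤ) - (v j : ℤ)) : ℂ)) • ∏ j, MvPolynomial.X j ^ v j })
    (IB : Ideal (MvPolynomial {j : Fin n // j ∈ σ} ℂ))
    (hIB : IB = Ideal.span { g : MvPolynomial {j : Fin n // j ∈ σ} ℂ |
      ∃ u v : {j : Fin n // j ∈ σ} → ℕ,
      (∑ j : {j : Fin n // j ∈ σ}, ((u j : ℤ) - (v j : ℤ)) • a (j : Fin n)) = 0 ∧
      g = (∏ j, MvPolynomial.X j ^ u j) -
        ((ρ (fun j' => if h : j' ∈ σ then (u ⟨j', h⟩ : ℤ) - (v ⟨j', h⟩ : ℤ) else 0) : ℂ)) •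
          ∏ j, MvPolynomial.X j ^ v j })
    (ψ : MvPolynomial (Fin n) ℂ →ₐ[ℂ] MvPolynomial {j : Fin n // j ∈ σ} ℂ)
    (hψ : ψ = MvPolynomial.aeval
      (fun j => if h : j ∈ σ then MvPolynomial.X (⟨j, h⟩ : {j : Fin n // j ∈ σ}) else 0)) :
    ∃ e : (MvPolynomial (Fin n) ℂ ⧸
            (I + Ideal.span (MvPolynomial.X '' {j : Fin n | j ∉ σ}))) ≃ₐ[ℂ]
          (MvPolynomial {j : Fin n // j ∈ σ} ℂ ⧸ IB),
      ∀ f : MvPolynomial (Fin n) ℂ,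
        e (Ideal.Quotient.mk _ f) = Ideal.Quotient.mk _ (ψ f) := by
  have hσ : IsRelationClosed a σ :=
    isRelationClosed_of_face (φ.toAddMonoidHom.comp ((Int.castAddHom ℝ).compLeft (Fin d)))
      hφ0 hφpos
  have hψκ : ψ = killCompl (Subtype.val_injective (p := (· ∈ σ))) :=
    hψ.trans (killCompl_subtype_val_eq_aeval σ).symm
  have hsurj : Function.Surjective ψ := hψκ ▸ killCompl_surjective _
  have hK : Ideal.span (X '' {j : Fin n | j ∉ σ}) = RingHom.ker ψ := by
    rw [hψκ, ker_killCompl, Subtype.range_coe_subtype, Set.compl_ofPred]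
  have hIB' : IB = I.map ψ := by
    rw [hIB, hI, hψκ]
    exact (map_killCompl_binomialIdeal a (fun w => (ρ w : ℂ)) hσ).symm
  subst hIB'
  rw [Submodule.add_eq_sup, hK]
  exact ⟨Ideal.quotientSupKerAlgEquivOfSurjective hsurj I,
    Ideal.quotientSupKerAlgEquivOfSurjective_mk hsurj I⟩

/-- With `a₁, …, aₙ ∈ ℤ^d`, `ρ` a character on `ker A`, and a face
`σ` (cut out by a linear functional vanishing on `σ` and positive off `σ`), the map
`xⱼ ↦ xⱼ (j ∈ σ)`, `xⱼ ↦ 0 (j ∉ σ)` induces a `ℂ`-algebra isomorphism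
`ℂ[x₁,…,xₙ]/(I_{A,ρ} + ⟨xⱼ : j ∉ σ⟩) ≅ ℂ[xⱼ : j ∈ σ]/I_{B,ρ'}`, where `B` consists
of the columns in `σ` and `ρ'` is the restriction of `ρ` to `ker B`. -/
theorem stmt_13 {d n : ℕ} (a : Fin n → (Fin d → ℤ))
    (ρ : (Fin n → ℤ) → ℂˣ)
    (hρ0 : ρ 0 = 1)
    (hρ : ∀ w w' : Fin n → ℤ, (∑ j, w j • a j) = 0 → (∑ j, w' j • a j) = 0 →
      ρ (w + w') = ρ w * ρ w')
    (σ : Finset (Fin n)) (φ : (Fin d → ℝ) →ₗ[ℝ] ℝ)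
    (hφ0 : ∀ j ∈ σ, φ (fun i => (a j i : ℝ)) = 0)
    (hφpos : ∀ j ∉ σ, 0 < φ (fun i => (a j i : ℝ)))
    (I : Ideal (MvPolynomial (Fin n) ℂ))
    (hI : I = Ideal.span { f : MvPolynomial (Fin n) ℂ | ∃ u v : Fin n → ℕ,
      (∑ j, ((u j : ℤ) - (v j : ℤ)) • a j) = 0 ∧
      f = (∏ j, MvPolynomial.X j ^ u j) -
        ((ρ (fun j => (u j : ℤ) - (v j : ℤ)) : ℂ)) • ∏ j, MvPolynomial.X j ^ v j })
    (IB : Ideal (MvPolynomial {j : Fin n // j ∈ σ} ℂ))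
    (hIB : IB = Ideal.span { g : MvPolynomial {j : Fin n // j ∈ σ} ℂ |
      ∃ u v : {j : Fin n // j ∈ σ} → ℕ,
      (∑ j : {j : Fin n // j ∈ σ}, ((u j : ℤ) - (v j : ℤ)) • a (j : Fin n)) = 0 ∧
      g = (∏ j, MvPolynomial.X j ^ u j) -
        ((ρ (fun j' => if h : j' ∈ σ then (u ⟨j', h⟩ : ℤ) - (v ⟨j', h⟩ : ℤ) else 0) : ℂ)) •
          ∏ j, MvPolynomial.X j ^ v j })
    (ψ : MvPolynomial (Fin n) ℂ →ₐ[ℂ] MvPolynomial {j : Fin n // j ∈ σ} ℂ)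
    (hψ : ψ = MvPolynomial.aeval
      (fun j => if h : j ∈ σ then MvPolynomial.X (⟨j, h⟩ : {j : Fin n // j ∈ σ}) else 0)) :
    ∃ e : (MvPolynomial (Fin n) ℂ ⧸
            (I + Ideal.span (MvPolynomial.X '' {j : Fin n | j ∉ σ}))) ≃ₐ[ℂ]
          (MvPolynomial {j : Fin n // j ∈ σ} ℂ ⧸ IB),
      ∀ f : MvPolynomial (Fin n) ℂ,
        e (Ideal.Quotient.mk _ f) = Ideal.Quotient.mk _ (ψ f) :=
  stmt_13_general a ρ σ φ hφ0 hφpos I hI IB hIB ψ hψ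
end

section
/- Let N = F ⊕ ℤ^d with F a finite abelian group, π : N → ℤ^d the projection, and 𝒜 = (a_1,…,a_n) a list of elements of N such that the images π(a_1),…,π(a_n) generate ℤ^d as a group and the cone C = ℝ_{≥0}π(a_1) + ⋯ + ℝ_{≥0}π(a_n) ⊆ ℝ^d satisfies C ∩ (−C) = {0}. Let K := {u ∈ N : π(u) ∈ C}. Then K is a submonoid of N containing the submonoid ℕ𝒜 generated by a_1,…,a_n, and K is finitely generated as an ℕ𝒜-module: there exist finitely many k_1,…,k_m ∈ K with K = ⋃_{i=1}^m (ℕ𝒜 + k_i). -/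
/-!
Write `u ∈ K` as `π u = ∑ cⱼ π(aⱼ)` with `cⱼ ≥ 0` and split off the integer parts:
`s = ∑ ⌊cⱼ⌋ aⱼ ∈ ℕ𝒜` and `u - s` has coefficients in `[0, 1)`, so `π(u - s)` lies in the
bounded parallelepiped spanned by the `π(aⱼ)`. Since `F` is finite and `ℤ^d` is discrete, only
finitely many elements of `N` map into a bounded set, and these are the generators `kᵢ`.
-/

open Finset

section ConePreimage

variable {N V ι : Type*} [AddCommGroup N] [Fintype ι]

/-- The paper's `K`, with a general homomorphism `φ` in place of `π`. -/
def conePreimage [AddCommGroup V] [Module ℝ V] (φ : N →+ V) (a : ι → N) : AddSubmonoid N where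
  carrier := {u | ∃ c : ι → ℝ, (∀ j, 0 ≤ c j) ∧ φ u = ∑ j, c j • φ (a j)}
  zero_mem' := ⟨0, fun _ => le_rfl, by simp⟩
  add_mem' := by
    rintro u v ⟨c, hc, hu⟩ ⟨c', hc', hv⟩
    exact ⟨c + c', fun j => add_nonneg (hc j) (hc' j), by
      simp only [map_add, hu, hv, Pi.add_apply, add_smul, sum_add_distrib]⟩

section Module

variable [AddCommGroup V] [Module ℝ V] (φ : N →+ V) (a : ι → N)

theorem closure_range_le_conePreimage :
    AddSubmonoid.closure (Set.range a) ≤ conePreimage φ a := by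
  classical
  refine AddSubmonoid.closure_le.2 (Set.range_subset_iff.2 fun j => ?_)
  exact ⟨Pi.single j 1, fun k => by by_cases h : k = j <;> simp [h],
    by simp [Pi.single_apply]⟩

end Module

variable [NormedAddCommGroup V] [NormedSpace ℝ V] (φ : N →+ V) (a : ι → N)

theorem exists_sub_mem_conePreimage_norm_le {u : N} (hu : u ∈ conePreimage φ a) :
    ∃ s ∈ AddSubmonoid.closure (Set.range a),
      u - s ∈ conePreimage φ a ∧ ‖φ (u - s)‖ ≤ ∑ j, ‖φ (a j)‖ := by
  obtain ⟨c, hc, hu⟩ := hu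
  set t : ι → ℝ := fun j => c j - ⌊c j⌋₊
  have ht_nonneg : ∀ j, 0 ≤ t j := fun j => sub_nonneg.2 (Nat.floor_le (hc j))
  have ht_lt_one : ∀ j, t j < 1 := fun j => sub_lt_iff_lt_add'.2 (Nat.lt_floor_add_one _)
  have hsub : φ (u - ∑ j, ⌊c j⌋₊ • a j) = ∑ j, t j • φ (a j) := by
    simp only [map_sub, map_sum, map_nsmul, hu, t, sub_smul, sum_sub_distrib,
      Nat.cast_smul_eq_nsmul]
  refine ⟨∑ j, ⌊c j⌋₊ • a j, AddSubmonoid.sum_mem _ fun j _ =>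
    AddSubmonoid.nsmul_mem _ (AddSubmonoid.subset_closure (Set.mem_range_self j)) _,
    ⟨t, ht_nonneg, hsub⟩, ?_⟩
  rw [hsub]
  refine (norm_sum_le _ _).trans (sum_le_sum fun j _ => ?_)
  rw [norm_smul, Real.norm_of_nonneg (ht_nonneg j)]
  exact mul_le_of_le_one_left (norm_nonneg _) (ht_lt_one j).le

theorem exists_conePreimage_eq_iUnion_add
    (hφ : ∀ r : ℝ, {u | ‖φ u‖ ≤ r}.Finite) :
    ∃ (m : ℕ) (g : Fin m → N), (∀ i, g i ∈ conePreimage φ a) ∧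
      (conePreimage φ a : Set N) =
        ⋃ i, (fun s => s + g i) '' (AddSubmonoid.closure (Set.range a) : Set N) := by
  set K := conePreimage φ a
  obtain ⟨m, g, hg⟩ := ((hφ (∑ j, ‖φ (a j)‖)).inter_of_right (K : Set N)).fin_embedding
  have hgK : ∀ i, g i ∈ K := fun i => by
    have hi : g i ∈ (K : Set N) ∩ {u | ‖φ u‖ ≤ ∑ j, ‖φ (a j)‖} := hg ▸ Set.mem_range_self i
    exact hi.1
  refine ⟨m, g, hgK, Set.Subset.antisymm (fun u hu => ?_) ?_⟩
  · obtain ⟨s, hs, hK, hnorm⟩ := exists_sub_mem_conePreimage_norm_le φ a hu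
    obtain ⟨i, hi⟩ : u - s ∈ Set.range g := hg ▸ ⟨hK, hnorm⟩
    exact Set.mem_iUnion.2 ⟨i, s, hs, by simp [hi]⟩
  · refine Set.iUnion_subset fun i => ?_
    rintro _ ⟨s, hs, rfl⟩
    exact K.add_mem (closure_range_le_conePreimage φ a hs) (hgK i)

end ConePreimage

theorem finite_norm_intCast_le {F : Type*} [Finite F] {d : ℕ} (r : ℝ) :
    {u : F × (Fin d → ℤ) | ‖fun i => (u.2 i : ℝ)‖ ≤ r}.Finite := by
  refine (Set.finite_univ.prod (isCompact_closedBall (0 : Fin d → ℤ) r).finite_of_discrete).subset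
    fun u hu => ⟨trivial, ?_⟩
  have hr : 0 ≤ r := (norm_nonneg _).trans hu
  rw [Set.mem_ofPred_eq, pi_norm_le_iff_of_nonneg hr] at hu
  rw [mem_closedBall_zero_iff, pi_norm_le_iff_of_nonneg hr]
  exact fun i => Int.norm_cast_real (u.2 i) ▸ hu i

theorem stmt_16_general {F : Type*} [AddCommGroup F] [Fintype F] {d n : ℕ}
    (a : Fin n → F × (Fin d → ℤ))
    (K : Set (F × (Fin d → ℤ)))
    (hK : K = {u : F × (Fin d → ℤ) | ∃ c : Fin n → ℝ, (∀ j, 0 ≤ c j) ∧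
      (fun i => (u.2 i : ℝ)) = ∑ j, c j • (fun i => ((a j).2 i : ℝ))}) :
    (0 ∈ K ∧ ∀ u ∈ K, ∀ v ∈ K, u + v ∈ K) ∧
    (↑(AddSubmonoid.closure (Set.range a)) ⊆ K) ∧
    ∃ (m : ℕ) (g : Fin m → F × (Fin d → ℤ)), (∀ i, g i ∈ K) ∧
      K = ⋃ i, (fun s => s + g i) '' ↑(AddSubmonoid.closure (Set.range a)) := by
  let φ : F × (Fin d → ℤ) →+ (Fin d → ℝ) :=
    ((Int.castAddHom ℝ).compLeft (Fin d)).comp (AddMonoidHom.snd _ _)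
  obtain rfl : K = conePreimage φ a := hK
  exact ⟨⟨zero_mem _, fun _ hu _ hv => add_mem hu hv⟩, closure_range_le_conePreimage φ a,
    exists_conePreimage_eq_iUnion_add φ a finite_norm_intCast_le⟩

/-- Let `N = F ⊕ ℤ^d` with `F` finite abelian, `π` the projection,
and `𝒜 = (a₁,…,aₙ)` elements of `N` whose images generate `ℤ^d` and span a pointed
cone `C`. Then `K = {u ∈ N : π(u) ∈ C}` is a submonoid of `N` containing the
submonoid `ℕ𝒜` generated by the `aⱼ`, and `K` is a finite union of translates
`ℕ𝒜 + kᵢ`. -/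
theorem stmt_16 {F : Type*} [AddCommGroup F] [Fintype F] {d n : ℕ}
    (a : Fin n → F × (Fin d → ℤ))
    (hspan : AddSubgroup.closure (Set.range fun j => (a j).2) = ⊤)
    (hpointed : ∀ c c' : Fin n → ℝ, (∀ j, 0 ≤ c j) → (∀ j, 0 ≤ c' j) →
      (∑ j, c j • (fun i => ((a j).2 i : ℝ))) +
        (∑ j, c' j • (fun i => ((a j).2 i : ℝ))) = 0 →
      (∑ j, c j • (fun i => ((a j).2 i : ℝ))) = 0)
    (K : Set (F × (Fin d → ℤ)))
    (hK : K = {u : F × (Fin d → ℤ) | ∃ c : Fin n → ℝ, (∀ j, 0 ≤ c j) ∧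
      (fun i => (u.2 i : ℝ)) = ∑ j, c j • (fun i => ((a j).2 i : ℝ))}) :
    (0 ∈ K ∧ ∀ u ∈ K, ∀ v ∈ K, u + v ∈ K) ∧
    (↑(AddSubmonoid.closure (Set.range a)) ⊆ K) ∧
    ∃ (m : ℕ) (g : Fin m → F × (Fin d → ℤ)), (∀ i, g i ∈ K) ∧
      K = ⋃ i, (fun s => s + g i) '' ↑(AddSubmonoid.closure (Set.range a)) :=
  stmt_16_general a K hK
end

section
/- Let N = F ⊕ ℤ^d with F a finite abelian group, π : N → ℤ^d the projection, and 𝒜 = (a_1,…,a_n) a list of elements of N such that the images π(a_1),…,π(a_n) generate ℤ^d as a group and the cone C = ℝ_{≥0}π(a_1) + ⋯ + ℝ_{≥0}π(a_n) ⊆ ℝ^d satisfies C ∩ (−C) = {0}. Let K° := {u ∈ N : π(u) lies in the topological interior of C in ℝ^d}. Then ℕ𝒜 + K° ⊆ K°, and K° is finitely generated as an ℕ𝒜-module: there exist finitely many k_1,…,k_m ∈ K° with K° = ⋃_{i=1}^m (ℕ𝒜 + k_i). -/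
/-!
Write `L c = ∑ⱼ cⱼ • π(aⱼ)`, so that `C = L(ℝ≥0ⁿ)`. Since the `π(aⱼ)` span `ℝ^d`, `L` is an open
map and the interior of `C` is exactly `L(ℝ>0ⁿ)`. Adding an element `∑ mⱼ • aⱼ` of `ℕ𝒜` adds
nonnegative coefficients, so it preserves `K°`. Conversely, if `π u = L c` with all `cⱼ > 0`,
subtracting `s = ∑ (⌈cⱼ⌉ - 1) • aⱼ ∈ ℕ𝒜` leaves `π (u - s) ∈ L((0,1]ⁿ)`, a subset of the interior
contained in a compact set; as `π` has finite fibres over compact sets, only finitely many such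
`u - s` occur.
-/

open Set Filter Topology

theorem LinearMap.interior_image_nonneg_eq_image_pos {ι E : Type*} [Fintype ι]
    [NormedAddCommGroup E] [NormedSpace ℝ E] [FiniteDimensional ℝ E]
    {L : (ι → ℝ) →ₗ[ℝ] E} (hL : Function.Surjective L) :
    interior (L '' univ.pi fun _ => Ici 0) = L '' univ.pi fun _ => Ioi 0 := by
  apply Subset.antisymm
  · intro x hx
    -- `x - ε • L 1` is still in the cone for small `ε > 0`; adding `ε • 1` back to its
    -- coefficients makes them all positive.
    have hcont : Continuous fun ε : ℝ => x - ε • L 1 := by fun_prop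
    have hnear : ∀ᶠ ε in 𝓝[>] (0 : ℝ), 0 < ε ∧ x - ε • L 1 ∈ L '' univ.pi fun _ => Ici 0 :=
      eventually_mem_nhdsWithin.and <| nhdsWithin_le_nhds <|
        ((hcont.tendsto' 0 x (by simp)).eventually (isOpen_interior.mem_nhds hx)).mono
          fun _ => (interior_subset ·)
    obtain ⟨ε, hε, c, hc, hcx⟩ := hnear.exists
    refine ⟨c + ε • 1, fun j _ => ?_, by rw [map_add, map_smul, hcx, sub_add_cancel]⟩
    simpa using add_pos_of_nonneg_of_pos (hc j trivial) hε
  · exact interior_maximal (image_mono <| pi_mono fun _ _ => Ioi_subset_Ici_self)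
      (L.isOpenMap_of_finiteDimensional hL _ (isOpen_set_pi finite_univ fun _ _ => isOpen_Ioi))

theorem span_range_intCast_eq_top {ι κ : Type*} [Fintype κ] {w : ι → κ → ℤ}
    (hw : AddSubgroup.closure (range w) = ⊤) :
    Submodule.span ℝ (range fun j i => (w j i : ℝ)) = ⊤ := by
  classical
  let cast : (κ → ℤ) →+ (κ → ℝ) := (Int.castAddHom ℝ).compLeft κ
  have hcast (y : κ → ℤ) : cast y ∈ Submodule.span ℝ (range fun j i => (w j i : ℝ)) := by
    induction (hw ▸ AddSubgroup.mem_top y : y ∈ AddSubgroup.closure (range w))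
      using AddSubgroup.closure_induction with
    | mem _ hy => obtain ⟨j, rfl⟩ := hy; exact Submodule.subset_span ⟨j, rfl⟩
    | zero => rw [map_zero]; exact zero_mem _
    | add y z _ _ hy hz => rw [map_add]; exact add_mem hy hz
    | neg y _ hy => rw [map_neg]; exact neg_mem hy
  refine Submodule.eq_top_iff'.mpr fun x => ?_
  rw [pi_eq_sum_univ x]
  refine Submodule.sum_mem _ fun i _ => Submodule.smul_mem _ _ ?_
  convert hcast fun j => if i = j then 1 else 0 using 1
  funext j
  by_cases i = j <;> simp [cast, *]

theorem tendsto_intCast_snd_cofinite_cocompact {F κ : Type*} [Finite F] [Finite κ] :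
    Tendsto (fun u : F × (κ → ℤ) => fun i => (u.2 i : ℝ)) cofinite (cocompact (κ → ℝ)) := by
  have hcast : Tendsto (fun y : κ → ℤ => fun i => (y i : ℝ)) cofinite (cocompact _) := by
    simpa only [coprodᵢ_cofinite, coprodᵢ_cocompact] using
      Tendsto.pi_map_coprodᵢ fun _ : κ => Int.tendsto_coe_cofinite
  rw [tendsto_cofinite_cocompact_iff] at hcast ⊢
  exact fun K hK => (finite_univ.prod (hcast K hK)).subset fun u hu => ⟨mem_univ u.1, hu⟩

theorem exists_nat_sub_mem_Ioc {x : ℝ} (hx : 0 < x) : ∃ m : ℕ, x - m ∈ Ioc 0 1 := by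
  have hceil : 1 ≤ ⌈x⌉₊ := Nat.ceil_pos.mpr hx
  refine ⟨⌈x⌉₊ - 1, ?_, ?_⟩ <;> push_cast [hceil]
  · linarith [Nat.ceil_lt_add_one hx.le]
  · linarith [Nat.le_ceil x]

section LatticeCone

variable {ι E N : Type*} [Fintype ι] [NormedAddCommGroup E] [NormedSpace ℝ E]
  [AddCommGroup N] (π : N →+ E) (a : ι → N)

theorem map_sum_nsmul_eq_linearCombination (m : ι → ℕ) :
    π (∑ j, m j • a j) = Fintype.linearCombination ℝ (π ∘ a) fun j => (m j : ℝ) := by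
  simp [Fintype.linearCombination_apply, map_sum, map_nsmul, Nat.cast_smul_eq_nsmul]

variable [FiniteDimensional ℝ E] {π a}

theorem add_mem_preimage_interior_cone
    (hL : Function.Surjective (Fintype.linearCombination ℝ (π ∘ a))) {s u : N}
    (hs : s ∈ AddSubmonoid.closure (range a))
    (hu : π u ∈ interior (Fintype.linearCombination ℝ (π ∘ a) '' univ.pi fun _ => Ici 0)) :
    π (s + u) ∈ interior (Fintype.linearCombination ℝ (π ∘ a) '' univ.pi fun _ => Ici 0) := by
  rw [LinearMap.interior_image_nonneg_eq_image_pos hL] at hu ⊢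
  obtain ⟨m, rfl⟩ := AddSubmonoid.mem_closure_range_iff_of_fintype.mp hs
  obtain ⟨c, hc, hcu⟩ := hu
  refine ⟨(fun j => (m j : ℝ)) + c, fun j _ => ?_, ?_⟩
  · exact add_pos_of_nonneg_of_pos (Nat.cast_nonneg _) (mem_Ioi.mp (hc j trivial))
  · rw [map_add, map_add, hcu, map_sum_nsmul_eq_linearCombination]

theorem exists_sub_sum_nsmul_mem_image_Ioc
    (hL : Function.Surjective (Fintype.linearCombination ℝ (π ∘ a))) {u : N}
    (hu : π u ∈ interior (Fintype.linearCombination ℝ (π ∘ a) '' univ.pi fun _ => Ici 0)) :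
    ∃ m : ι → ℕ, π (u - ∑ j, m j • a j) ∈
      Fintype.linearCombination ℝ (π ∘ a) '' univ.pi fun _ => Ioc 0 1 := by
  rw [LinearMap.interior_image_nonneg_eq_image_pos hL] at hu
  obtain ⟨c, hc, hcu⟩ := hu
  choose m hm using fun j => exists_nat_sub_mem_Ioc (hc j trivial)
  refine ⟨m, c - fun j => (m j : ℝ), fun j _ => hm j, ?_⟩
  rw [map_sub, map_sub, hcu, map_sum_nsmul_eq_linearCombination]

theorem exists_finite_preimage_interior_cone_eq_biUnion
    (hπ : Tendsto π cofinite (cocompact E))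
    (hL : Function.Surjective (Fintype.linearCombination ℝ (π ∘ a))) :
    ∃ G : Set N, G.Finite ∧
      G ⊆ π ⁻¹' interior (Fintype.linearCombination ℝ (π ∘ a) '' univ.pi fun _ => Ici 0) ∧
      π ⁻¹' interior (Fintype.linearCombination ℝ (π ∘ a) '' univ.pi fun _ => Ici 0) =
        ⋃ g ∈ G, (fun s => s + g) '' AddSubmonoid.closure (range a) := by
  set L := Fintype.linearCombination ℝ (π ∘ a)
  set G := π ⁻¹' (L '' univ.pi fun _ => Ioc 0 1)
  have hGK : G ⊆ π ⁻¹' interior (L '' univ.pi fun _ => Ici 0) := by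
    rw [LinearMap.interior_image_nonneg_eq_image_pos hL]
    exact preimage_mono <| image_mono <| pi_mono fun _ _ => Ioc_subset_Ioi_self
  have hGfin : G.Finite :=
    (tendsto_cofinite_cocompact_iff.mp hπ _ <| (isCompact_univ_pi fun _ => isCompact_Icc).image
      L.continuous_of_finiteDimensional).subset <|
        preimage_mono <| image_mono <| pi_mono fun _ _ => Ioc_subset_Icc_self
  refine ⟨G, hGfin, hGK, Subset.antisymm (fun u hu => ?_) ?_⟩
  · obtain ⟨m, hm⟩ := exists_sub_sum_nsmul_mem_image_Ioc hL hu
    exact mem_biUnion hm ⟨∑ j, m j • a j,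
      AddSubmonoid.mem_closure_range_iff_of_fintype.mpr ⟨m, rfl⟩, add_sub_cancel _ _⟩
  · simp only [iUnion_subset_iff, image_subset_iff]
    exact fun g hg s hs => add_mem_preimage_interior_cone hL hs (hGK hg)

end LatticeCone

theorem stmt_17_general {F : Type*} [AddCommGroup F] [Fintype F] {d n : ℕ}
    (a : Fin n → F × (Fin d → ℤ))
    (hspan : AddSubgroup.closure (Set.range fun j => (a j).2) = ⊤)
    (C : Set (Fin d → ℝ))
    (hC : C = {x : Fin d → ℝ | ∃ c : Fin n → ℝ, (∀ j, 0 ≤ c j) ∧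
      x = ∑ j, c j • (fun i => ((a j).2 i : ℝ))})
    (Kc : Set (F × (Fin d → ℤ)))
    (hKc : Kc = {u : F × (Fin d → ℤ) | (fun i => (u.2 i : ℝ)) ∈ interior C}) :
    (∀ s ∈ AddSubmonoid.closure (Set.range a), ∀ u ∈ Kc, s + u ∈ Kc) ∧
    ∃ (m : ℕ) (g : Fin m → F × (Fin d → ℤ)), (∀ i, g i ∈ Kc) ∧
      Kc = ⋃ i, (fun s => s + g i) '' ↑(AddSubmonoid.closure (Set.range a)) := by
  let π : F × (Fin d → ℤ) →+ (Fin d → ℝ) :=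
    ((Int.castAddHom ℝ).compLeft (Fin d)).comp (AddMonoidHom.snd F _)
  have hL : Function.Surjective (Fintype.linearCombination ℝ (π ∘ a)) :=
    (span_range_eq_top_iff_surjective_fintypeLinearCombination ℝ _).mp
      (span_range_intCast_eq_top hspan)
  have hCL : C = Fintype.linearCombination ℝ (π ∘ a) '' univ.pi fun _ => Ici 0 := by
    rw [hC]
    ext x
    simp only [mem_ofPred_eq, mem_image, mem_univ_pi, mem_Ici, Fintype.linearCombination_apply]
    exact exists_congr fun c => and_congr_right fun _ => eq_comm
  have hKL : Kc = π ⁻¹' interior C := hKc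
  have hπ : Tendsto π cofinite (cocompact _) := tendsto_intCast_snd_cofinite_cocompact
  obtain ⟨G, hGfin, hGK, hKG⟩ := exists_finite_preimage_interior_cone_eq_biUnion hπ hL
  obtain ⟨m, g, rfl⟩ := hGfin.fin_embedding
  rw [← hCL, ← hKL] at hGK hKG
  refine ⟨fun s hs u hu => ?_, m, g, fun i => hGK (mem_range_self i), hKG.trans biUnion_range⟩
  rw [hKL, hCL] at hu ⊢
  exact add_mem_preimage_interior_cone hL hs hu

/-- Let `N = F ⊕ ℤ^d` with `F` finite abelian, `π` the projection,
and `𝒜 = (a₁,…,aₙ)` elements of `N` whose images generate `ℤ^d` and span a pointed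
cone `C ⊆ ℝ^d`. Let `K° = {u ∈ N : π(u) ∈ int C}`. Then `ℕ𝒜 + K° ⊆ K°`, and `K°`
is a finite union of translates `ℕ𝒜 + kᵢ`. -/
theorem stmt_17 {F : Type*} [AddCommGroup F] [Fintype F] {d n : ℕ}
    (a : Fin n → F × (Fin d → ℤ))
    (hspan : AddSubgroup.closure (Set.range fun j => (a j).2) = ⊤)
    (hpointed : ∀ c c' : Fin n → ℝ, (∀ j, 0 ≤ c j) → (∀ j, 0 ≤ c' j) →
      (∑ j, c j • (fun i => ((a j).2 i : ℝ))) +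
        (∑ j, c' j • (fun i => ((a j).2 i : ℝ))) = 0 →
      (∑ j, c j • (fun i => ((a j).2 i : ℝ))) = 0)
    (C : Set (Fin d → ℝ))
    (hC : C = {x : Fin d → ℝ | ∃ c : Fin n → ℝ, (∀ j, 0 ≤ c j) ∧
      x = ∑ j, c j • (fun i => ((a j).2 i : ℝ))})
    (Kc : Set (F × (Fin d → ℤ)))
    (hKc : Kc = {u : F × (Fin d → ℤ) | (fun i => (u.2 i : ℝ)) ∈ interior C}) :
    (∀ s ∈ AddSubmonoid.closure (Set.range a), ∀ u ∈ Kc, s + u ∈ Kc) ∧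
    ∃ (m : ℕ) (g : Fin m → F × (Fin d → ℤ)), (∀ i, g i ∈ Kc) ∧
      Kc = ⋃ i, (fun s => s + g i) '' ↑(AddSubmonoid.closure (Set.range a)) :=
  stmt_17_general a hspan C hC Kc hKc
end
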